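/- arXiv:2203.01206 — 7 statements merged into one kernel-verified Lean document; each statement's English description precedes it below -/
import Mathlib

section
/- For every real p with 1 < p < ∞ and every dimension N ≥ 1 there exists a constant δ > 0 such that for all vectors X, Y ∈ ℝ^N with X ≠ Y one has ⟨|X|^{p-2}X − |Y|^{p-2}Y, X − Y⟩ ≥ δ (|X − Y| + |Y|)^{p-2} |X − Y|². -/
/-! With `s = ‖X‖ ≥ t = ‖Y‖`, `a = s ^ (p - 2)` and `b = t ^ (p - 2)`, the difference
`⟪a • X - b • Y, X - Y⟫ - c a ‖X - Y‖²` is affine in `⟪X, Y⟫` with nonpositive slope as soon as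
`c ≤ 1/2`, so by Cauchy–Schwarz it is smallest for positively collinear `X, Y`. There it reduces to
the one-dimensional bound `s ^ (p - 1) - t ^ (p - 1) ≥ min 1 (p - 1) s ^ (p - 2) (s - t)`, which is
convexity of `r ↦ r ^ (p - 1)` for `p ≥ 2` and concavity (Bernoulli) for `p ≤ 2`. Finally
`max ‖X‖ ‖Y‖ ≤ ‖X - Y‖ + ‖Y‖ ≤ 3 max ‖X‖ ‖Y‖` makes the weight `(‖X - Y‖ + ‖Y‖) ^ (p - 2)`
comparable to `(max ‖X‖ ‖Y‖) ^ (p - 2)`. -/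

open Real
open scoped RealInnerProductSpace

lemma rpow_le_rpow_abs_mul_rpow {u v k r : ℝ} (hu : 0 < u) (hv : 0 < v) (huv : u ≤ k * v)
    (hvu : v ≤ k * u) : u ^ r ≤ k ^ |r| * v ^ r := by
  have hk : 0 < k := pos_of_mul_pos_left (hu.trans_le huv) hv.le
  rcases le_total 0 r with hr | hr
  · calc u ^ r ≤ (k * v) ^ r := rpow_le_rpow hu.le huv hr
      _ = k ^ |r| * v ^ r := by rw [abs_of_nonneg hr, mul_rpow hk.le hv.le]
  · calc u ^ r ≤ (v / k) ^ r := rpow_le_rpow_of_nonpos (by positivity) (by rwa [div_le_iff₀' hk]) hr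
      _ = k ^ |r| * v ^ r := by
        rw [abs_of_nonpos hr, div_rpow hv.le hk.le, rpow_neg hk.le]
        ring

lemma min_one_mul_one_sub_le_one_sub_rpow {q x : ℝ} (hq : 0 < q) (hx₀ : 0 ≤ x) (hx₁ : x ≤ 1) :
    min 1 q * (1 - x) ≤ 1 - x ^ q := by
  rcases le_total q 1 with hq₁ | hq₁
  · have bernoulli := rpow_one_add_le_one_add_mul_self (s := x - 1) (by linarith) hq.le hq₁
    rw [min_eq_right hq₁]
    simp only [add_sub_cancel] at bernoulli
    linarith
  · have : x ^ q ≤ x ^ (1 : ℝ) := rpow_le_rpow_of_exponent_ge' hx₀ hx₁ zero_le_one hq₁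
    rw [rpow_one] at this
    rw [min_eq_left hq₁]
    linarith

lemma min_one_mul_rpow_sub_one_mul_sub_le_rpow_sub_rpow {q s t : ℝ} (hq : 0 < q) (ht : 0 ≤ t)
    (hts : t ≤ s) : min 1 q * s ^ (q - 1) * (s - t) ≤ s ^ q - t ^ q := by
  rcases hts.eq_or_lt with rfl | hts'
  · simp
  have hs : 0 < s := ht.trans_lt hts'
  have hsq : 0 < s ^ q := rpow_pos_of_pos hs q
  have key := min_one_mul_one_sub_le_one_sub_rpow hq (div_nonneg ht hs.le)
    ((div_le_one hs).2 hts)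
  calc min 1 q * s ^ (q - 1) * (s - t) = s ^ q * (min 1 q * (1 - t / s)) := by
        rw [rpow_sub_one hs.ne']
        field_simp
    _ ≤ s ^ q * (1 - (t / s) ^ q) := by gcongr
    _ = s ^ q - t ^ q := by
        rw [div_rpow ht hs.le]
        field_simp

section InnerProductSpace

variable {E : Type*} [NormedAddCommGroup E] [InnerProductSpace ℝ E]

lemma mul_norm_sub_sq_le_inner_smul_sub_smul (X Y : E) {a b c : ℝ} (ha : 0 ≤ a) (hb : 0 ≤ b)
    (hc : c ≤ 1 / 2) (hYX : ‖Y‖ ≤ ‖X‖) (h : c * a * (‖X‖ - ‖Y‖) ≤ a * ‖X‖ - b * ‖Y‖) :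
    c * a * ‖X - Y‖ ^ 2 ≤ ⟪a • X - b • Y, X - Y⟫ := by
  have hexpand : ⟪a • X - b • Y, X - Y⟫ = a * ‖X‖ ^ 2 + b * ‖Y‖ ^ 2 - (a + b) * ⟪X, Y⟫ := by
    simp only [inner_sub_left, inner_sub_right, real_inner_smul_left, real_inner_self_eq_norm_sq,
      real_inner_comm X Y]
    ring
  have cauchy_schwarz := real_inner_le_norm X Y
  have hslope : 0 ≤ a + b - 2 * c * a := by nlinarith
  rw [hexpand, norm_sub_sq_real]
  nlinarith [mul_nonneg hslope (sub_nonneg.2 cauchy_schwarz),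
    mul_nonneg (sub_nonneg.2 hYX) (sub_nonneg.2 h)]

lemma min_mul_max_rpow_mul_norm_sub_sq_le_inner {p : ℝ} (hp : 1 < p) (X Y : E) :
    min 1 (p - 1) / 2 * max ‖X‖ ‖Y‖ ^ (p - 2) * ‖X - Y‖ ^ 2 ≤
      ⟪‖X‖ ^ (p - 2) • X - ‖Y‖ ^ (p - 2) • Y, X - Y⟫ := by
  wlog hYX : ‖Y‖ ≤ ‖X‖ generalizing X Y
  · have := this Y X (le_of_not_ge hYX)
    rwa [max_comm, norm_sub_rev, ← inner_neg_neg, neg_sub, neg_sub] at this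
  have hpow : ∀ r : ℝ, 0 ≤ r → r ^ (p - 1) = r ^ (p - 2) * r := fun r hr => by
    rw [← rpow_add_one' hr (by linarith)]
    ring_nf
  have hscalar := min_one_mul_rpow_sub_one_mul_sub_le_rpow_sub_rpow (sub_pos.2 hp)
    (norm_nonneg Y) hYX
  rw [hpow _ (norm_nonneg X), hpow _ (norm_nonneg Y), show p - 1 - 1 = p - 2 by ring] at hscalar
  rw [max_eq_left hYX]
  refine mul_norm_sub_sq_le_inner_smul_sub_smul X Y (by positivity) (by positivity)
    (div_le_div_of_nonneg_right (min_le_left _ _) zero_le_two) hYX ?_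
  have : 0 ≤ min 1 (p - 1) * ‖X‖ ^ (p - 2) * (‖X‖ - ‖Y‖) := by
    have := sub_nonneg.2 hYX
    positivity
  linarith

end InnerProductSpace

theorem coercivity_pLaplace_general (p : ℝ) (hp : 1 < p) (N : ℕ) :
    ∃ δ : ℝ, 0 < δ ∧ ∀ X Y : EuclideanSpace ℝ (Fin N), X ≠ Y →
      δ * ((‖X - Y‖ + ‖Y‖) ^ (p - 2) * ‖X - Y‖ ^ 2) ≤
        ⟪(‖X‖ ^ (p - 2)) • X - (‖Y‖ ^ (p - 2)) • Y, X - Y⟫ := by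
  refine ⟨min 1 (p - 1) / 2 / 3 ^ |p - 2|, by positivity, fun X Y hXY => ?_⟩
  set M := max ‖X‖ ‖Y‖
  have hd : 0 < ‖X - Y‖ := norm_pos_iff.2 (sub_ne_zero.2 hXY)
  have hXM : ‖X‖ ≤ M := le_max_left _ _
  have hYM : ‖Y‖ ≤ M := le_max_right _ _
  have hdM : ‖X - Y‖ ≤ 2 * M := by linarith [norm_sub_le X Y]
  have hMd : M ≤ ‖X - Y‖ + ‖Y‖ := max_le (by linarith [norm_sub_norm_le X Y]) (by linarith)
  have hweight : (‖X - Y‖ + ‖Y‖) ^ (p - 2) ≤ 3 ^ |p - 2| * M ^ (p - 2) :=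
    rpow_le_rpow_abs_mul_rpow (by positivity) (by linarith) (by linarith) (by linarith)
  calc min 1 (p - 1) / 2 / 3 ^ |p - 2| * ((‖X - Y‖ + ‖Y‖) ^ (p - 2) * ‖X - Y‖ ^ 2)
      ≤ min 1 (p - 1) / 2 / 3 ^ |p - 2| * (3 ^ |p - 2| * M ^ (p - 2) * ‖X - Y‖ ^ 2) := by
        gcongr
    _ = min 1 (p - 1) / 2 * M ^ (p - 2) * ‖X - Y‖ ^ 2 := by
        field_simp
    _ ≤ _ := min_mul_max_rpow_mul_norm_sub_sq_le_inner hp X Y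

/-- Coercivity estimate for the p-Laplacian vector field: for `1 < p < ∞` there is `δ > 0`
with `⟨|X|^{p-2}X − |Y|^{p-2}Y, X − Y⟩ ≥ δ (|X−Y| + |Y|)^{p-2} |X−Y|²` for all `X ≠ Y`. -/
theorem coercivity_pLaplace (p : ℝ) (hp : 1 < p) (N : ℕ) (hN : 1 ≤ N) :
    ∃ δ : ℝ, 0 < δ ∧ ∀ X Y : EuclideanSpace ℝ (Fin N), X ≠ Y →
      δ * ((‖X - Y‖ + ‖Y‖) ^ (p - 2) * ‖X - Y‖ ^ 2) ≤
        ⟪(‖X‖ ^ (p - 2)) • X - (‖Y‖ ^ (p - 2)) • Y, X - Y⟫ :=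
  coercivity_pLaplace_general p hp N
end

section
/- For every real p with 1 < p < ∞ and every dimension N ≥ 1 there exists a constant C > 0 such that for all vectors x, y ∈ ℝ^N one has | |x+y|^{p-2}(x+y) − |x|^{p-2}x | ≤ C (|x| + |y|)^{p-2} |y|. -/
lemma abs_rpow_sub_rpow_le' (q : ℝ) {s t : ℝ} (hs : 0 < s) (ht : 0 < t) :
    |s ^ q - t ^ q| ≤ |q| * max (s ^ (q - 1)) (t ^ (q - 1)) * |s - t| := by
  have hmin : 0 < min s t := lt_min hs ht
  have hmem : ∀ r ∈ Set.Icc (min s t) (max s t), (0:ℝ) < r :=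
    fun r hr => lt_of_lt_of_le hmin hr.1
  have hder : ∀ r ∈ Set.Icc (min s t) (max s t),
      HasDerivWithinAt (fun x : ℝ => x ^ q) (q * r ^ (q - 1))
        (Set.Icc (min s t) (max s t)) r := by
    intro r hr
    exact (Real.hasDerivAt_rpow_const (Or.inl (hmem r hr).ne')).hasDerivWithinAt
  have hbound : ∀ r ∈ Set.Icc (min s t) (max s t),
      ‖q * r ^ (q - 1)‖ ≤ |q| * max (s ^ (q - 1)) (t ^ (q - 1)) := by
    intro r hr
    rw [Real.norm_eq_abs, abs_mul, abs_of_nonneg (Real.rpow_nonneg (hmem r hr).le _)]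
    refine mul_le_mul_of_nonneg_left ?_ (abs_nonneg q)
    rcases le_or_gt 0 (q - 1) with hq | hq
    · calc r ^ (q - 1) ≤ (max s t) ^ (q - 1) := Real.rpow_le_rpow (hmem r hr).le hr.2 hq
        _ ≤ max (s ^ (q - 1)) (t ^ (q - 1)) := by
            rcases max_cases s t with ⟨h, _⟩ | ⟨h, _⟩ <;> rw [h]
            · exact le_max_left _ _
            · exact le_max_right _ _
    · calc r ^ (q - 1) ≤ (min s t) ^ (q - 1) :=
            Real.rpow_le_rpow_of_nonpos hmin hr.1 hq.le
        _ ≤ max (s ^ (q - 1)) (t ^ (q - 1)) := by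
            rcases min_cases s t with ⟨h, _⟩ | ⟨h, _⟩ <;> rw [h]
            · exact le_max_left _ _
            · exact le_max_right _ _
  have := Convex.norm_image_sub_le_of_norm_hasDerivWithin_le hder hbound
    (convex_Icc _ _) (Set.mem_Icc.2 ⟨min_le_right s t, le_max_right s t⟩)
    (Set.mem_Icc.2 ⟨min_le_left s t, le_max_left s t⟩)
  simpa [Real.norm_eq_abs] using this

lemma pLaplace_key {E : Type*} [NormedAddCommGroup E] [NormedSpace ℝ E]
    (p : ℝ) (hp : 1 < p) :
    ∃ C : ℝ, 0 < C ∧ ∀ a b : E,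
      ‖(‖a‖ ^ (p - 2)) • a - (‖b‖ ^ (p - 2)) • b‖ ≤
        C * ((‖a‖ + ‖b‖) ^ (p - 2) * ‖a - b‖) := by
  set M : ℝ := max ((3/2 : ℝ) ^ (p - 3)) ((2:ℝ) ^ (3 - p)) with hM_def
  set L : ℝ := max 1 ((5/2 : ℝ) ^ (2 - p)) with hL_def
  set K : ℝ := max 1 ((5 : ℝ) ^ (2 - p)) with hK_def
  have hM0 : 0 ≤ M := le_trans (Real.rpow_nonneg (by norm_num) _) (le_max_left _ _)
  have hL1 : 1 ≤ L := le_max_left _ _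
  have hK1 : 1 ≤ K := le_max_left _ _
  refine ⟨10 + K + |p - 2| * M * L, by nlinarith [abs_nonneg (p-2), mul_nonneg (mul_nonneg (abs_nonneg (p-2)) hM0) (le_trans zero_le_one hL1)], ?_⟩
  set C : ℝ := 10 + K + |p - 2| * M * L with hC_def
  have hC10 : 10 ≤ C := by
    nlinarith [mul_nonneg (mul_nonneg (abs_nonneg (p-2)) hM0) (le_trans zero_le_one hL1)]
  intro a b
  have hFnorm : ∀ v : E, ‖(‖v‖ ^ (p - 2)) • v‖ = ‖v‖ ^ (p - 1) := by
    intro v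
    rw [norm_smul, Real.norm_eq_abs, abs_of_nonneg (Real.rpow_nonneg (norm_nonneg v) _)]
    rcases eq_or_ne ‖v‖ 0 with h | h
    · rw [h, mul_zero, Real.zero_rpow (by intro hh; linarith : p - 1 ≠ 0)]
    · rw [← Real.rpow_add_one h (p - 2)]
      congr 1
      ring
  rcases eq_or_ne a b with rfl | hab
  · simp [Real.rpow_nonneg]
  have hd : 0 < ‖a - b‖ := by
    rw [norm_pos_iff]; exact sub_ne_zero_of_ne hab
  have hds : ‖a - b‖ ≤ ‖a‖ + ‖b‖ := norm_sub_le a b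
  have hs : 0 < ‖a‖ + ‖b‖ := lt_of_lt_of_le hd hds
  have hSnn : 0 ≤ (‖a‖ + ‖b‖) ^ (p - 2) := Real.rpow_nonneg hs.le _
  rcases le_or_gt (‖b‖ / 2) (‖a - b‖) with hA | hB
  · -- Case A : ‖a-b‖ ≥ ‖b‖/2
    have h1 : ‖(‖a‖ ^ (p - 2)) • a - (‖b‖ ^ (p - 2)) • b‖ ≤ ‖a‖ ^ (p-1) + ‖b‖ ^ (p-1) := by
      rw [← hFnorm a, ← hFnorm b]; exact norm_sub_le _ _
    have ha_le : ‖a‖ ^ (p-1) ≤ (‖a‖ + ‖b‖) ^ (p-1) :=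
      Real.rpow_le_rpow (norm_nonneg a) (by linarith [norm_nonneg b]) (by linarith)
    have hb_le : ‖b‖ ^ (p-1) ≤ (‖a‖ + ‖b‖) ^ (p-1) :=
      Real.rpow_le_rpow (norm_nonneg b) (by linarith [norm_nonneg a]) (by linarith)
    have hsplit : (‖a‖ + ‖b‖) ^ (p-1) = (‖a‖ + ‖b‖) ^ (p-2) * (‖a‖ + ‖b‖) := by
      rw [show p - 1 = p - 2 + 1 by ring, Real.rpow_add_one hs.ne']
    have h5 : ‖a‖ + ‖b‖ ≤ 5 * ‖a - b‖ := by
      have : ‖a‖ ≤ ‖a - b‖ + ‖b‖ := by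
        simpa using norm_add_le (a - b) b
      linarith
    calc ‖(‖a‖ ^ (p - 2)) • a - (‖b‖ ^ (p - 2)) • b‖
        ≤ ‖a‖ ^ (p-1) + ‖b‖ ^ (p-1) := h1
      _ ≤ 2 * ((‖a‖ + ‖b‖) ^ (p-2) * (‖a‖ + ‖b‖)) := by rw [← hsplit]; linarith
      _ ≤ 2 * ((‖a‖ + ‖b‖) ^ (p-2) * (5 * ‖a - b‖)) := by
          have := mul_le_mul_of_nonneg_left h5 hSnn
          linarith
      _ = 10 * ((‖a‖ + ‖b‖) ^ (p-2) * ‖a - b‖) := by ring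
      _ ≤ C * ((‖a‖ + ‖b‖) ^ (p-2) * ‖a - b‖) :=
          mul_le_mul_of_nonneg_right hC10 (mul_nonneg hSnn hd.le)
  · -- Case B : ‖a-b‖ < ‖b‖/2
    have hnb : 0 < ‖b‖ := by linarith
    have hab_lb : ‖b‖ - ‖a‖ ≤ ‖a - b‖ := by
      have := abs_norm_sub_norm_le a b
      rw [abs_le] at this; linarith [this.1]
    have hab_ub : ‖a‖ - ‖b‖ ≤ ‖a - b‖ := by
      have := abs_norm_sub_norm_le a b
      rw [abs_le] at this; linarith [this.2]
    have hna : ‖b‖ / 2 ≤ ‖a‖ := by linarith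
    have hna0 : 0 < ‖a‖ := by linarith
    have hna_ub : ‖a‖ ≤ 3/2 * ‖b‖ := by linarith
    -- decomposition
    have hid : (‖a‖ ^ (p - 2)) • a - (‖b‖ ^ (p - 2)) • b
        = (‖a‖ ^ (p - 2)) • (a - b) + (‖a‖ ^ (p - 2) - ‖b‖ ^ (p - 2)) • b := by
      rw [smul_sub, sub_smul]; abel
    have hsplit_norm : ‖(‖a‖ ^ (p - 2)) • a - (‖b‖ ^ (p - 2)) • b‖
        ≤ ‖a‖ ^ (p - 2) * ‖a - b‖ + |‖a‖ ^ (p - 2) - ‖b‖ ^ (p - 2)| * ‖b‖ := by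
      rw [hid]
      refine le_trans (norm_add_le _ _) ?_
      rw [norm_smul, norm_smul, Real.norm_eq_abs, Real.norm_eq_abs,
        abs_of_nonneg (Real.rpow_nonneg (norm_nonneg a) _)]
    -- Term 1 bound
    have hT1 : ‖a‖ ^ (p - 2) ≤ K * (‖a‖ + ‖b‖) ^ (p - 2) := by
      rcases le_or_gt 2 p with h2p | h2p
      · calc ‖a‖ ^ (p-2) ≤ (‖a‖ + ‖b‖) ^ (p-2) :=
              Real.rpow_le_rpow (norm_nonneg a) (by linarith) (by linarith)
          _ ≤ K * (‖a‖ + ‖b‖) ^ (p-2) := le_mul_of_one_le_left hSnn hK1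
      · have h5a : (‖a‖ + ‖b‖) / 5 ≤ ‖a‖ := by linarith
        have : ‖a‖ ^ (p-2) ≤ ((‖a‖ + ‖b‖) / 5) ^ (p-2) :=
          Real.rpow_le_rpow_of_nonpos (by linarith) h5a (by linarith)
        have hdiv : ((‖a‖ + ‖b‖) / 5) ^ (p-2) = (‖a‖ + ‖b‖) ^ (p-2) * (5:ℝ) ^ (2-p) := by
          rw [Real.div_rpow hs.le (by norm_num : (0:ℝ) ≤ 5), div_eq_mul_inv,
            ← Real.rpow_neg (by norm_num : (0:ℝ) ≤ 5), show -(p-2) = 2 - p by ring]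
        have hK5 : (5:ℝ) ^ (2-p) ≤ K := le_max_right _ _
        calc ‖a‖ ^ (p-2) ≤ (‖a‖ + ‖b‖) ^ (p-2) * (5:ℝ) ^ (2-p) := by rw [← hdiv]; exact this
          _ ≤ K * (‖a‖ + ‖b‖) ^ (p-2) := by
              rw [mul_comm]; exact mul_le_mul_of_nonneg_right hK5 hSnn
    -- Term 2 bound
    have hmvt := abs_rpow_sub_rpow_le' (p - 2) hna0 hnb
    rw [show p - 2 - 1 = p - 3 by ring] at hmvt
    have hmax : max (‖a‖ ^ (p - 3)) (‖b‖ ^ (p - 3)) ≤ M * ‖b‖ ^ (p - 3) := by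
      have hbp3 : 0 ≤ ‖b‖ ^ (p-3) := Real.rpow_nonneg hnb.le _
      rcases le_or_gt 3 p with h3p | h3p
      · have hM1 : (1:ℝ) ≤ M := by
          refine le_trans ?_ (le_max_left _ _)
          calc (1:ℝ) = (3/2 : ℝ) ^ (0:ℝ) := (Real.rpow_zero _).symm
            _ ≤ (3/2 : ℝ) ^ (p - 3) := Real.rpow_le_rpow_of_exponent_le (by norm_num) (by linarith)
        have h1 : ‖a‖ ^ (p-3) ≤ (3/2 * ‖b‖) ^ (p-3) :=
          Real.rpow_le_rpow hna0.le hna_ub (by linarith)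
        have h2 : (3/2 * ‖b‖) ^ (p-3) = (3/2:ℝ) ^ (p-3) * ‖b‖ ^ (p-3) :=
          Real.mul_rpow (by norm_num) hnb.le
        have h3 : (3/2:ℝ) ^ (p-3) ≤ M := le_max_left _ _
        refine max_le ?_ ?_
        · rw [h2] at h1
          exact le_trans h1 (mul_le_mul_of_nonneg_right h3 hbp3)
        · exact le_mul_of_one_le_left hbp3 hM1
      · have hM1 : (1:ℝ) ≤ M := by
          refine le_trans ?_ (le_max_right _ _)
          calc (1:ℝ) = (2 : ℝ) ^ (0:ℝ) := (Real.rpow_zero _).symm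
            _ ≤ (2 : ℝ) ^ (3 - p) := Real.rpow_le_rpow_of_exponent_le (by norm_num) (by linarith)
        have h1 : ‖a‖ ^ (p-3) ≤ (‖b‖ / 2) ^ (p-3) :=
          Real.rpow_le_rpow_of_nonpos (by linarith) hna (by linarith)
        have h2 : (‖b‖ / 2) ^ (p-3) = (2:ℝ) ^ (3-p) * ‖b‖ ^ (p-3) := by
          rw [Real.div_rpow hnb.le (by norm_num : (0:ℝ) ≤ 2), div_eq_mul_inv,
            ← Real.rpow_neg (by norm_num : (0:ℝ) ≤ 2), show -(p-3) = 3 - p by ring]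
          ring
        have h3 : (2:ℝ) ^ (3-p) ≤ M := le_max_right _ _
        refine max_le ?_ ?_
        · rw [h2] at h1
          exact le_trans h1 (mul_le_mul_of_nonneg_right h3 hbp3)
        · exact le_mul_of_one_le_left hbp3 hM1
    have hbq : ‖b‖ ^ (p - 3) * ‖b‖ = ‖b‖ ^ (p - 2) := by
      rw [show p - 2 = p - 3 + 1 by ring, Real.rpow_add_one hnb.ne']
    have hbL : ‖b‖ ^ (p - 2) ≤ L * (‖a‖ + ‖b‖) ^ (p - 2) := by
      rcases le_or_gt 2 p with h2p | h2p
      · calc ‖b‖ ^ (p-2) ≤ (‖a‖ + ‖b‖) ^ (p-2) :=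
              Real.rpow_le_rpow (norm_nonneg b) (by linarith) (by linarith)
          _ ≤ L * (‖a‖ + ‖b‖) ^ (p-2) := le_mul_of_one_le_left hSnn hL1
      · have h52 : (‖a‖ + ‖b‖) / (5/2) ≤ ‖b‖ := by
          rw [div_le_iff₀ (by norm_num : (0:ℝ) < 5/2)]; linarith
        have : ‖b‖ ^ (p-2) ≤ ((‖a‖ + ‖b‖) / (5/2)) ^ (p-2) :=
          Real.rpow_le_rpow_of_nonpos (by positivity) h52 (by linarith)
        have hdiv : ((‖a‖ + ‖b‖) / (5/2)) ^ (p-2) = (‖a‖ + ‖b‖) ^ (p-2) * (5/2:ℝ) ^ (2-p) := by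
          rw [Real.div_rpow hs.le (by norm_num : (0:ℝ) ≤ 5/2), div_eq_mul_inv,
            ← Real.rpow_neg (by norm_num : (0:ℝ) ≤ 5/2), show -(p-2) = 2 - p by ring]
        have hL5 : (5/2:ℝ) ^ (2-p) ≤ L := le_max_right _ _
        calc ‖b‖ ^ (p-2) ≤ (‖a‖ + ‖b‖) ^ (p-2) * (5/2:ℝ) ^ (2-p) := by rw [← hdiv]; exact this
          _ ≤ L * (‖a‖ + ‖b‖) ^ (p-2) := by
              rw [mul_comm]; exact mul_le_mul_of_nonneg_right hL5 hSnn
    have habs_d : |‖a‖ - ‖b‖| ≤ ‖a - b‖ := abs_norm_sub_norm_le a b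
    have hT2 : |‖a‖ ^ (p - 2) - ‖b‖ ^ (p - 2)| * ‖b‖
        ≤ |p - 2| * M * L * ((‖a‖ + ‖b‖) ^ (p - 2) * ‖a - b‖) := by
      have step1 : |‖a‖ ^ (p - 2) - ‖b‖ ^ (p - 2)| ≤
          |p - 2| * (M * ‖b‖ ^ (p - 3)) * ‖a - b‖ := by
        refine le_trans hmvt ?_
        have h1 : |p-2| * max (‖a‖ ^ (p-3)) (‖b‖ ^ (p-3)) ≤ |p-2| * (M * ‖b‖ ^ (p-3)) :=
          mul_le_mul_of_nonneg_left hmax (abs_nonneg _)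
        have h2 : 0 ≤ |p-2| * max (‖a‖ ^ (p-3)) (‖b‖ ^ (p-3)) :=
          mul_nonneg (abs_nonneg _) (le_trans (Real.rpow_nonneg hnb.le _) (le_max_right _ _))
        exact mul_le_mul h1 habs_d (abs_nonneg _) (by positivity)
      calc |‖a‖ ^ (p - 2) - ‖b‖ ^ (p - 2)| * ‖b‖
          ≤ (|p - 2| * (M * ‖b‖ ^ (p - 3)) * ‖a - b‖) * ‖b‖ :=
            mul_le_mul_of_nonneg_right step1 hnb.le
        _ = |p - 2| * M * ‖a - b‖ * (‖b‖ ^ (p - 3) * ‖b‖) := by ring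
        _ = |p - 2| * M * ‖a - b‖ * ‖b‖ ^ (p - 2) := by rw [hbq]
        _ ≤ |p - 2| * M * ‖a - b‖ * (L * (‖a‖ + ‖b‖) ^ (p - 2)) := by
            refine mul_le_mul_of_nonneg_left hbL ?_
            positivity
        _ = |p - 2| * M * L * ((‖a‖ + ‖b‖) ^ (p - 2) * ‖a - b‖) := by ring
    have hT1' : ‖a‖ ^ (p - 2) * ‖a - b‖ ≤ K * ((‖a‖ + ‖b‖) ^ (p - 2) * ‖a - b‖) := by
      calc ‖a‖ ^ (p - 2) * ‖a - b‖ ≤ (K * (‖a‖ + ‖b‖) ^ (p - 2)) * ‖a - b‖ :=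
            mul_le_mul_of_nonneg_right hT1 hd.le
        _ = K * ((‖a‖ + ‖b‖) ^ (p - 2) * ‖a - b‖) := by ring
    have hfinal : K * ((‖a‖ + ‖b‖) ^ (p - 2) * ‖a - b‖)
        + |p - 2| * M * L * ((‖a‖ + ‖b‖) ^ (p - 2) * ‖a - b‖)
        ≤ C * ((‖a‖ + ‖b‖) ^ (p - 2) * ‖a - b‖) := by
      have h0 : 0 ≤ (‖a‖ + ‖b‖) ^ (p - 2) * ‖a - b‖ := mul_nonneg hSnn hd.le
      have hCeq : C * ((‖a‖ + ‖b‖) ^ (p - 2) * ‖a - b‖)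
          = 10 * ((‖a‖ + ‖b‖) ^ (p - 2) * ‖a - b‖)
            + K * ((‖a‖ + ‖b‖) ^ (p - 2) * ‖a - b‖)
            + |p - 2| * M * L * ((‖a‖ + ‖b‖) ^ (p - 2) * ‖a - b‖) := by
        rw [hC_def]; ring
      linarith
    linarith [hsplit_norm, hT1', hT2]

open scoped RealInnerProductSpace

/-- Continuity estimate for the p-Laplacian vector field: for `1 < p < ∞` there is `C > 0`
with `| |x+y|^{p-2}(x+y) − |x|^{p-2}x | ≤ C (|x| + |y|)^{p-2} |y|` for all `x, y`. -/
theorem continuity_pLaplace (p : ℝ) (hp : 1 < p) (N : ℕ) (hN : 1 ≤ N) :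
    ∃ C : ℝ, 0 < C ∧ ∀ x y : EuclideanSpace ℝ (Fin N),
      ‖(‖x + y‖ ^ (p - 2)) • (x + y) - (‖x‖ ^ (p - 2)) • x‖ ≤
        C * ((‖x‖ + ‖y‖) ^ (p - 2) * ‖y‖) := by
  obtain ⟨C, hC, hkey⟩ := pLaplace_key (E := EuclideanSpace ℝ (Fin N)) p hp
  set D : ℝ := max ((2:ℝ) ^ (p - 2)) ((2:ℝ) ^ (2 - p)) with hD_def
  have hD0 : 0 < D :=
    lt_of_lt_of_le (Real.rpow_pos_of_pos (by norm_num) _) (le_max_left _ _)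
  refine ⟨C * D, mul_pos hC hD0, ?_⟩
  intro x y
  rcases eq_or_ne y 0 with rfl | hy
  · simp only [add_zero, sub_self, norm_zero, mul_zero, le_refl]
  have hy0 : 0 < ‖y‖ := norm_pos_iff.2 hy
  have hxy_sub : x + y - x = y := by abel
  have h1 := hkey (x + y) x
  rw [hxy_sub] at h1
  -- compare the two bases
  have hs1 : 0 < ‖x + y‖ + ‖x‖ := by
    have : ‖y‖ ≤ ‖x + y‖ + ‖x‖ := by
      calc ‖y‖ = ‖x + y - x‖ := by rw [hxy_sub]
        _ ≤ ‖x + y‖ + ‖x‖ := norm_sub_le _ _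
    linarith
  have hs2 : 0 < ‖x‖ + ‖y‖ := by linarith [norm_nonneg x]
  have hcomp : (‖x + y‖ + ‖x‖) ^ (p - 2) ≤ D * (‖x‖ + ‖y‖) ^ (p - 2) := by
    rcases le_or_gt 2 p with h2p | h2p
    · have hle : ‖x + y‖ + ‖x‖ ≤ 2 * (‖x‖ + ‖y‖) := by
        have := norm_add_le x y
        linarith [norm_nonneg x]
      calc (‖x + y‖ + ‖x‖) ^ (p - 2) ≤ (2 * (‖x‖ + ‖y‖)) ^ (p - 2) :=
            Real.rpow_le_rpow (by positivity) hle (by linarith)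
        _ = (2:ℝ) ^ (p - 2) * (‖x‖ + ‖y‖) ^ (p - 2) :=
            Real.mul_rpow (by norm_num) hs2.le
        _ ≤ D * (‖x‖ + ‖y‖) ^ (p - 2) :=
            mul_le_mul_of_nonneg_right (le_max_left _ _) (Real.rpow_nonneg hs2.le _)
    · have hle : (‖x‖ + ‖y‖) / 2 ≤ ‖x + y‖ + ‖x‖ := by
        have h1 : ‖y‖ ≤ ‖x + y‖ + ‖x‖ := by
          calc ‖y‖ = ‖x + y - x‖ := by rw [hxy_sub]
            _ ≤ ‖x + y‖ + ‖x‖ := norm_sub_le _ _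
        have h2 : ‖x‖ ≤ ‖x + y‖ + ‖x‖ := by linarith [norm_nonneg (x + y)]
        linarith
      have hstep : (‖x + y‖ + ‖x‖) ^ (p - 2) ≤ ((‖x‖ + ‖y‖) / 2) ^ (p - 2) :=
        Real.rpow_le_rpow_of_nonpos (by positivity) hle (by linarith)
      have hdiv : ((‖x‖ + ‖y‖) / 2) ^ (p - 2)
          = (‖x‖ + ‖y‖) ^ (p - 2) * (2:ℝ) ^ (2 - p) := by
        rw [Real.div_rpow hs2.le (by norm_num : (0:ℝ) ≤ 2), div_eq_mul_inv,
          ← Real.rpow_neg (by norm_num : (0:ℝ) ≤ 2), show -(p-2) = 2 - p by ring]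
      calc (‖x + y‖ + ‖x‖) ^ (p - 2) ≤ (‖x‖ + ‖y‖) ^ (p - 2) * (2:ℝ) ^ (2 - p) := by
            rw [← hdiv]; exact hstep
        _ ≤ D * (‖x‖ + ‖y‖) ^ (p - 2) := by
            rw [mul_comm]
            exact mul_le_mul_of_nonneg_right (le_max_right _ _) (Real.rpow_nonneg hs2.le _)
  calc ‖(‖x + y‖ ^ (p - 2)) • (x + y) - (‖x‖ ^ (p - 2)) • x‖
      ≤ C * ((‖x + y‖ + ‖x‖) ^ (p - 2) * ‖y‖) := h1
    _ ≤ C * (D * (‖x‖ + ‖y‖) ^ (p - 2) * ‖y‖) := by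
        refine mul_le_mul_of_nonneg_left ?_ hC.le
        exact mul_le_mul_of_nonneg_right hcomp hy0.le
    _ = C * D * ((‖x‖ + ‖y‖) ^ (p - 2) * ‖y‖) := by ring
end

section
/- Let p ≥ 2 be a real number and set C₁ = (p−1)(p³−3p²+5p−2)/p³ and C₂ = 2(p−1)(p²−2p+2)/p². Then p³−3p²+5p−2 > 0, and for every t ∈ [−1,1] and all real numbers a, b one has C₁ a² − C₂ t a b + (1/p + (p−2)t²) b² ≥ ((p−1)(p−2)/(p(p³−3p²+5p−2))) b². In particular, for every t ∈ [−1,1], 4 C₁ (1/p + (p−2)t²) − C₂² t² ≥ 4(p−1)²(p−2)/p⁴. -/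
/-!
For `C₁ > 0` the form `C₁ a² − d a b + e b²` dominates `m b²` as soon as `d² ≤ 4 C₁ (e − m)`,
since `4 C₁ (C₁ a² − d a b + (e − m) b²) = (2 C₁ a − d b)² + (4 C₁ (e − m) − d²) b²`.
With `d = C₂ t`, `e = 1/p + (p−2)t²` and the chosen `m` one has `4 C₁ m = 4(p−1)²(p−2)/p⁴`, and the
discriminant margin factors as `4(p−1)(1−t²)(p³−4p²+8p−4)/p⁴`. In `q = p − 1` the two cubics read
`q³ + 2q + 1` and `q(q² − q + 3) + 1`, so both are positive for `p ≥ 1`.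
-/

theorem quadratic_form_ge_of_sq_le {c d e m : ℝ} (hc : 0 < c) (h : d ^ 2 ≤ 4 * c * (e - m))
    (a b : ℝ) : m * b ^ 2 ≤ c * a ^ 2 - d * a * b + e * b ^ 2 := by
  have hsq : 4 * c * (c * a ^ 2 - d * a * b + e * b ^ 2 - m * b ^ 2)
      = (2 * c * a - d * b) ^ 2 + (4 * c * (e - m) - d ^ 2) * b ^ 2 := by ring
  have hnonneg : 0 ≤ 4 * c * (c * a ^ 2 - d * a * b + e * b ^ 2 - m * b ^ 2) := by
    rw [hsq]
    have := sub_nonneg.2 h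
    positivity
  exact sub_nonneg.1 (nonneg_of_mul_nonneg_right (by linarith) (by positivity : 0 < 4 * c))

theorem cubic_pos_of_one_le {p : ℝ} (hp : 1 ≤ p) : 0 < p ^ 3 - 3 * p ^ 2 + 5 * p - 2 := by
  have hq : 0 ≤ p - 1 := sub_nonneg.2 hp
  have : p ^ 3 - 3 * p ^ 2 + 5 * p - 2 = (p - 1) ^ 3 + 2 * (p - 1) + 1 := by ring
  rw [this]
  positivity

theorem cubic_margin_pos_of_one_le {p : ℝ} (hp : 1 ≤ p) : 0 < p ^ 3 - 4 * p ^ 2 + 8 * p - 4 := by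
  have hq : 0 ≤ p - 1 := sub_nonneg.2 hp
  have : p ^ 3 - 4 * p ^ 2 + 8 * p - 4 = (p - 1) * ((p - 1 - 1 / 2) ^ 2 + 11 / 4) + 1 := by ring
  rw [this]
  positivity

theorem discriminant_sub_eq {p : ℝ} (hp : p ≠ 0) (t : ℝ) :
    4 * ((p - 1) * (p ^ 3 - 3 * p ^ 2 + 5 * p - 2) / p ^ 3) * (1 / p + (p - 2) * t ^ 2)
        - (2 * (p - 1) * (p ^ 2 - 2 * p + 2) / p ^ 2) ^ 2 * t ^ 2
        - 4 * (p - 1) ^ 2 * (p - 2) / p ^ 4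
      = 4 * (p - 1) * (1 - t ^ 2) * (p ^ 3 - 4 * p ^ 2 + 8 * p - 4) / p ^ 4 := by
  field_simp
  ring

theorem discriminant_ge {p t : ℝ} (hp : 1 ≤ p) (ht : t ^ 2 ≤ 1) :
    4 * (p - 1) ^ 2 * (p - 2) / p ^ 4 ≤
      4 * ((p - 1) * (p ^ 3 - 3 * p ^ 2 + 5 * p - 2) / p ^ 3) * (1 / p + (p - 2) * t ^ 2)
        - (2 * (p - 1) * (p ^ 2 - 2 * p + 2) / p ^ 2) ^ 2 * t ^ 2 := by
  rw [← sub_nonneg, discriminant_sub_eq (by positivity)]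
  have h₁ : 0 ≤ p - 1 := sub_nonneg.2 hp
  have h₂ : 0 ≤ 1 - t ^ 2 := sub_nonneg.2 ht
  have h₃ := cubic_margin_pos_of_one_le hp
  positivity

theorem leading_coeff_mul_bound_eq {p : ℝ} (hp : p ≠ 0) (hQ : p ^ 3 - 3 * p ^ 2 + 5 * p - 2 ≠ 0) :
    4 * ((p - 1) * (p ^ 3 - 3 * p ^ 2 + 5 * p - 2) / p ^ 3)
        * ((p - 1) * (p - 2) / (p * (p ^ 3 - 3 * p ^ 2 + 5 * p - 2)))
      = 4 * (p - 1) ^ 2 * (p - 2) / p ^ 4 := by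
  generalize p ^ 3 - 3 * p ^ 2 + 5 * p - 2 = Q at hQ ⊢
  field_simp

/-- Algebraic core of the convexity lemma for `w ↦ ∫ |∇ w^{1/p}|^p`: for `p ≥ 2`, with
`C₁ = (p−1)(p³−3p²+5p−2)/p³` and `C₂ = 2(p−1)(p²−2p+2)/p²`, one has `p³−3p²+5p−2 > 0`,
the quadratic form `C₁ a² − C₂ t a b + (1/p + (p−2)t²) b²` is bounded below by
`((p−1)(p−2)/(p(p³−3p²+5p−2))) b²` for `t ∈ [−1,1]`, and in particular
`4C₁(1/p + (p−2)t²) − C₂² t² ≥ 4(p−1)²(p−2)/p⁴`. -/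
theorem convexity_quadratic_form (p : ℝ) (hp : 2 ≤ p) :
    0 < p ^ 3 - 3 * p ^ 2 + 5 * p - 2 ∧
    (∀ t ∈ Set.Icc (-1 : ℝ) 1, ∀ a b : ℝ,
      ((p - 1) * (p ^ 3 - 3 * p ^ 2 + 5 * p - 2) / p ^ 3) * a ^ 2
        - (2 * (p - 1) * (p ^ 2 - 2 * p + 2) / p ^ 2) * t * a * b
        + (1 / p + (p - 2) * t ^ 2) * b ^ 2
      ≥ ((p - 1) * (p - 2) / (p * (p ^ 3 - 3 * p ^ 2 + 5 * p - 2))) * b ^ 2) ∧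
    (∀ t ∈ Set.Icc (-1 : ℝ) 1,
      4 * ((p - 1) * (p ^ 3 - 3 * p ^ 2 + 5 * p - 2) / p ^ 3) * (1 / p + (p - 2) * t ^ 2)
        - (2 * (p - 1) * (p ^ 2 - 2 * p + 2) / p ^ 2) ^ 2 * t ^ 2
      ≥ 4 * (p - 1) ^ 2 * (p - 2) / p ^ 4) := by
  have hQ := cubic_pos_of_one_le (by linarith : 1 ≤ p)
  have hdisc : ∀ t ∈ Set.Icc (-1 : ℝ) 1, _ := fun t ht =>
    discriminant_ge (by linarith) ((sq_le_one_iff_abs_le_one t).2 (abs_le.2 ht))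
  refine ⟨hQ, fun t ht a b => quadratic_form_ge_of_sq_le ?_ ?_ a b, hdisc⟩
  · exact div_pos (mul_pos (by linarith) hQ) (by positivity)
  · have hm := leading_coeff_mul_bound_eq (by positivity) hQ.ne'
    have := hdisc t ht
    rw [mul_pow]
    linarith
end

section
/- Let N ≥ 2, 1 < p < N and α > N. Define W : {y ∈ ℝ^N : |y| ≥ 1} → ℝ by W(y) = (α−N)^{−1/(p−1)} ∫_{|y|}^{∞} (t^{α−N} − 1)^{1/(p−1)} t^{−(α−1)/(p−1)} dt. Then the integral converges for every such y, W is positive on {|y| ≥ 1}, W is strictly decreasing as a function of |y|, and W is a classical solution of −Δ_p W = |y|^{−α} in the open set {y : |y| > 1}: the vector field |∇W|^{p−2}∇W is of class C¹ there and −div(|∇W|^{p−2}∇W)(y) = |y|^{−α} for all |y| > 1. -/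
/-!
Write `W y = c F ‖y‖` with `F r = ∫_r^∞ g` and `c = (α - N)^(-1/(p-1))`. Since
`g t ≤ t^((1-N)/(p-1))` and `p < N`, `F` is finite; `g > 0` on `(1, ∞)` makes it positive and
strictly decreasing, and `∇W(y) = -c g(‖y‖) y / ‖y‖`. The constant `c` and the exponents in `g`
are chosen so that `(c g(r))^(p-1) = (r^(1-N) - r^(1-α)) / (α - N)`: the flux `|∇W|^(p-2) ∇W`
is the explicit field `φ(‖y‖) y` with `φ r = (r^(-α) - r^(-N)) / (α - N)`, which is smooth away
from `0`, and `div (φ(‖y‖) y) = N φ + r φ' = -r^(-α)`.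
-/

open MeasureTheory Real
open scoped RealInnerProductSpace

noncomputable section

/-- The divergence of a vector field `V : ℝ^N → ℝ^N`, as the trace of its Fréchet derivative
computed in the standard orthonormal basis. -/
def vecDiv {N : ℕ} (V : EuclideanSpace ℝ (Fin N) → EuclideanSpace ℝ (Fin N))
    (x : EuclideanSpace ℝ (Fin N)) : ℝ :=
  ∑ i : Fin N, ⟪fderiv ℝ V x (EuclideanSpace.single i 1), EuclideanSpace.single i 1⟫

open Set

section InnerProductSpace

variable {E : Type*} [NormedAddCommGroup E] [InnerProductSpace ℝ E]

theorem hasFDerivAt_norm_of_ne_zero {y : E} (hy : y ≠ 0) :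
    HasFDerivAt (‖·‖) (‖y‖⁻¹ • innerSL ℝ y) y := by
  have h := (hasFDerivAt_id y).norm_sq.sqrt (by simpa using hy)
  simp only [id, Real.sqrt_sq (norm_nonneg _)] at h
  convert h using 1
  ext v
  simp only [smul_apply, coe_innerSL_apply, smul_eq_mul, one_div, mul_inv_rev,
    ContinuousLinearMap.comp_id, nsmul_eq_mul, Nat.cast_ofNat]
  field_simp

theorem HasDerivAt.hasGradientAt_comp_norm [CompleteSpace E] {f : ℝ → ℝ} {f' : ℝ} {y : E}
    (hf : HasDerivAt f f' ‖y‖) (hy : y ≠ 0) :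
    HasGradientAt (fun z => f ‖z‖) ((f' / ‖y‖) • y) y := by
  rw [hasGradientAt_iff_hasFDerivAt]
  refine (hf.comp_hasFDerivAt y (hasFDerivAt_norm_of_ne_zero hy)).congr_fderiv ?_
  ext v
  simp only [smul_apply, coe_innerSL_apply, smul_eq_mul, map_smul,
    InnerProductSpace.toDual_apply_apply]
  ring

def pFlux (p : ℝ) (v : E) : E := ‖v‖ ^ (p - 2) • v

theorem pFlux_neg_div_smul (p : ℝ) {s : ℝ} (hs : 0 < s) {y : E} (hy : y ≠ 0) :
    pFlux p ((-(s / ‖y‖)) • y) = (-(s ^ (p - 1) / ‖y‖)) • y := by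
  rw [pFlux, norm_smul, norm_neg, norm_div, norm_of_nonneg hs.le, norm_norm,
    div_mul_cancel₀ _ (norm_ne_zero_iff.2 hy), smul_smul, show p - 1 = p - 2 + 1 by ring,
    rpow_add_one hs.ne']
  ring_nf

end InnerProductSpace

section Divergence

variable {N : ℕ}

theorem Filter.EventuallyEq.vecDiv_eq
    {V V' : EuclideanSpace ℝ (Fin N) → EuclideanSpace ℝ (Fin N)} {y : EuclideanSpace ℝ (Fin N)}
    (h : V =ᶠ[nhds y] V') : vecDiv V y = vecDiv V' y := by
  simp only [vecDiv, h.fderiv_eq]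

theorem vecDiv_comp_norm_smul {φ : ℝ → ℝ} {y : EuclideanSpace ℝ (Fin N)}
    (hφ : DifferentiableAt ℝ φ ‖y‖) (hy : y ≠ 0) :
    vecDiv (fun z => φ ‖z‖ • z) y = N * φ ‖y‖ + ‖y‖ * deriv φ ‖y‖ := by
  have hV : HasFDerivAt (fun z => φ ‖z‖ • z) _ y :=
    (hφ.hasDerivAt.comp_hasFDerivAt y (hasFDerivAt_norm_of_ne_zero hy)).smul (hasFDerivAt_id y)
  have hsq : ∑ i, y i * y i = ‖y‖ * ‖y‖ := by
    rw [← real_inner_self_eq_norm_mul_norm, PiLp.inner_apply]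
    simp [sq]
  rw [vecDiv, hV.fderiv]
  simp only [add_apply, smul_apply, ContinuousLinearMap.smulRight_apply,
    ContinuousLinearMap.id_apply, innerSL_apply_apply, Function.comp_apply, inner_add_left,
    EuclideanSpace.inner_single_right, Finset.sum_add_distrib, PiLp.smul_apply,
    PiLp.single_apply, smul_eq_mul, ite_true, starRingEnd_apply, star_trivial, one_mul, mul_one,
    Finset.sum_const, Finset.card_univ, Fintype.card_fin, nsmul_eq_mul, mul_assoc,
    ← Finset.mul_sum, hsq]
  field_simp

end Divergence

theorem hasDerivAt_integral_Ioi {E : Type*} [NormedAddCommGroup E] [NormedSpace ℝ E]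
    [CompleteSpace E] {f : ℝ → E} {a r : ℝ} (hf : IntegrableOn f (Ioi a)) (har : a < r)
    (hfr : ContinuousAt f r) :
    HasDerivAt (fun s => ∫ t in Ioi s, f t) (-f r) r := by
  have hFTC : HasDerivAt (fun s => ∫ t in a..s, f t) (f r) r :=
    intervalIntegral.integral_hasDerivAt_right
      ((intervalIntegrable_iff_integrableOn_Ioc_of_le har.le).2 (hf.mono_set Ioc_subset_Ioi_self))
      ⟨Ioi a, Ioi_mem_nhds har, hf.aestronglyMeasurable⟩ hfr
  refine (hFTC.const_sub (∫ t in Ioi a, f t)).congr_of_eventuallyEq ?_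
  filter_upwards [Ioi_mem_nhds har] with s hs
  rw [← intervalIntegral.integral_Ioi_sub_Ioi hf hs.le, sub_sub_cancel]

def profile (n p α t : ℝ) : ℝ := (t ^ (α - n) - 1) ^ (1 / (p - 1)) * t ^ (-(α - 1) / (p - 1))

section Profile

variable {n p α : ℝ}

theorem profile_nonneg (hnα : n ≤ α) {t : ℝ} (ht : 1 ≤ t) : 0 ≤ profile n p α t :=
  mul_nonneg (rpow_nonneg (sub_nonneg.2 (one_le_rpow ht (sub_nonneg.2 hnα))) _)
    (rpow_nonneg (zero_le_one.trans ht) _)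

theorem profile_pos (hnα : n < α) {t : ℝ} (ht : 1 < t) : 0 < profile n p α t :=
  mul_pos (rpow_pos_of_pos (sub_pos.2 (one_lt_rpow ht (sub_pos.2 hnα))) _)
    (rpow_pos_of_pos (zero_lt_one.trans ht) _)

theorem continuousOn_profile (hnα : n < α) : ContinuousOn (profile n p α) (Ioi 1) := by
  intro t ht
  have ht0 : t ≠ 0 := (zero_lt_one.trans ht).ne'
  refine ContinuousAt.continuousWithinAt
    (ContinuousAt.mul ?_ (continuousAt_rpow_const _ _ (.inl ht0)))
  exact ((continuousAt_rpow_const _ _ (.inl ht0)).sub continuousAt_const).rpow_const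
    (.inl (sub_pos.2 (one_lt_rpow ht (sub_pos.2 hnα))).ne')

theorem profile_le_rpow (hp : 1 < p) (hnα : n ≤ α) {t : ℝ} (ht : 1 ≤ t) :
    profile n p α t ≤ t ^ ((1 - n) / (p - 1)) := by
  have ht0 : 0 < t := zero_lt_one.trans_le ht
  calc profile n p α t ≤ (t ^ (α - n)) ^ (1 / (p - 1)) * t ^ (-(α - 1) / (p - 1)) := by
        refine mul_le_mul_of_nonneg_right (rpow_le_rpow ?_ (sub_le_self _ zero_le_one) ?_)
          (rpow_nonneg ht0.le _)
        · exact sub_nonneg.2 (one_le_rpow ht (sub_nonneg.2 hnα))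
        · positivity
    _ = t ^ ((1 - n) / (p - 1)) := by
        rw [← rpow_mul ht0.le, ← rpow_add ht0]
        congr 1
        field_simp
        ring

theorem integrableOn_profile (hp : 1 < p) (hpn : p < n) (hnα : n < α) {r : ℝ} (hr : 1 ≤ r) :
    IntegrableOn (profile n p α) (Ioi r) := by
  have hdecay : IntegrableOn (fun t : ℝ => t ^ ((1 - n) / (p - 1))) (Ioi r) :=
    integrableOn_Ioi_rpow_of_lt (by rw [div_lt_iff₀ (sub_pos.2 hp)]; linarith)
      (zero_lt_one.trans_le hr)
  refine hdecay.mono' (((continuousOn_profile hnα).mono (Ioi_subset_Ioi hr)).aestronglyMeasurable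
    measurableSet_Ioi) ?_
  filter_upwards [ae_restrict_mem measurableSet_Ioi] with t ht
  have ht1 : 1 ≤ t := hr.trans (le_of_lt ht)
  rw [norm_of_nonneg (profile_nonneg hnα.le ht1)]
  exact profile_le_rpow hp hnα.le ht1

theorem integral_profile_sub_pos (hp : 1 < p) (hpn : p < n) (hnα : n < α) {r₁ r₂ : ℝ}
    (hr₁ : 1 ≤ r₁) (h : r₁ < r₂) :
    0 < (∫ t in Ioi r₁, profile n p α t) - ∫ t in Ioi r₂, profile n p α t := by
  have hint := integrableOn_profile hp hpn hnα hr₁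
  rw [intervalIntegral.integral_Ioi_sub_Ioi hint h.le]
  exact intervalIntegral.intervalIntegral_pos_of_pos_on
    ((intervalIntegrable_iff_integrableOn_Ioc_of_le h.le).2 (hint.mono_set Ioc_subset_Ioi_self))
    (fun t ht => profile_pos hnα (hr₁.trans_lt ht.1)) h

theorem strictAntiOn_integral_profile (hp : 1 < p) (hpn : p < n) (hnα : n < α) :
    StrictAntiOn (fun r => ∫ t in Ioi r, profile n p α t) (Ici 1) :=
  fun _ hr₁ _ _ h => sub_pos.1 (integral_profile_sub_pos hp hpn hnα hr₁ h)

theorem integral_profile_pos (hp : 1 < p) (hpn : p < n) (hnα : n < α) {r : ℝ} (hr : 1 ≤ r) :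
    0 < ∫ t in Ioi r, profile n p α t := by
  have htail : 0 ≤ ∫ t in Ioi (r + 1), profile n p α t :=
    setIntegral_nonneg measurableSet_Ioi fun t ht =>
      profile_nonneg hnα.le (by linarith [mem_Ioi.1 ht])
  linarith [integral_profile_sub_pos hp hpn hnα hr (lt_add_one r)]

theorem hasDerivAt_integral_profile (hp : 1 < p) (hpn : p < n) (hnα : n < α) {r : ℝ}
    (hr : 1 < r) : HasDerivAt (fun s => ∫ t in Ioi s, profile n p α t) (-profile n p α r) r := by
  obtain ⟨a, ha1, har⟩ := exists_between hr
  exact hasDerivAt_integral_Ioi (integrableOn_profile hp hpn hnα ha1.le) har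
    ((continuousOn_profile hnα).continuousAt (Ioi_mem_nhds hr))

end Profile

section Flux

variable {n p α : ℝ}

def fluxProfile (n α r : ℝ) : ℝ := (α - n)⁻¹ * (r ^ (-α) - r ^ (-n))

theorem fluxProfile_eq_neg_rpow_div (hp : 1 < p) (hnα : n < α) {r : ℝ} (hr : 1 ≤ r) :
    fluxProfile n α r = -(((α - n) ^ (-(1 : ℝ) / (p - 1)) * profile n p α r) ^ (p - 1) / r) := by
  have hr0 : 0 < r := zero_lt_one.trans_le hr
  have hp0 : p - 1 ≠ 0 := (sub_pos.2 hp).ne'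
  have hbase : 0 ≤ r ^ (α - n) - 1 := sub_nonneg.2 (one_le_rpow hr (sub_nonneg.2 hnα.le))
  rw [profile, mul_rpow (rpow_nonneg (sub_pos.2 hnα).le _) (by positivity),
    mul_rpow (rpow_nonneg hbase _) (rpow_nonneg hr0.le _), ← rpow_mul (sub_pos.2 hnα).le,
    ← rpow_mul hbase, ← rpow_mul hr0.le, div_mul_cancel₀ _ hp0, div_mul_cancel₀ _ hp0,
    div_mul_cancel₀ _ hp0, rpow_one, rpow_neg_one, show -(α - 1) = -α + 1 by ring,
    rpow_add_one hr0.ne', fluxProfile, sub_mul, ← mul_assoc, ← rpow_add hr0,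
    show α - n + -α = -n by ring]
  field_simp
  ring

theorem hasDerivAt_fluxProfile {r : ℝ} (hr : r ≠ 0) :
    HasDerivAt (fluxProfile n α) ((α - n)⁻¹ * (-α * r ^ (-α - 1) - -n * r ^ (-n - 1))) r :=
  ((hasDerivAt_rpow_const (.inl hr)).sub (hasDerivAt_rpow_const (.inl hr))).const_mul _

theorem mul_fluxProfile_add_mul_deriv (hnα : n ≠ α) {r : ℝ} (hr : 0 < r) :
    n * fluxProfile n α r + r * deriv (fluxProfile n α) r = -r ^ (-α) := by
  rw [(hasDerivAt_fluxProfile hr.ne').deriv, fluxProfile, rpow_sub_one hr.ne',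
    rpow_sub_one hr.ne']
  field_simp
  ring

theorem contDiffOn_fluxProfile_norm_smul {E : Type*} [NormedAddCommGroup E]
    [InnerProductSpace ℝ E] {k : ℕ∞} :
    ContDiffOn ℝ k (fun y : E => fluxProfile n α ‖y‖ • y) {0}ᶜ := by
  intro y hy
  have hy0 : ‖y‖ ≠ 0 := norm_ne_zero_iff.2 hy
  have hnorm : ContDiffAt ℝ k (‖·‖) y := contDiffAt_norm ℝ hy
  exact (contDiffAt_const.mul ((hnorm.rpow_const_of_ne hy0).sub
    (hnorm.rpow_const_of_ne hy0))).smul contDiffAt_id |>.contDiffWithinAt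

end Flux

section RadialSolution

variable {E : Type*} [NormedAddCommGroup E] [InnerProductSpace ℝ E] [CompleteSpace E]
  {n p α : ℝ}

def radialSolution (n p α : ℝ) (y : E) : ℝ :=
  (α - n) ^ (-(1 : ℝ) / (p - 1)) * ∫ t in Ioi ‖y‖, profile n p α t

theorem hasGradientAt_radialSolution (hp : 1 < p) (hpn : p < n) (hnα : n < α) {y : E}
    (hy : 1 < ‖y‖) :
    HasGradientAt (radialSolution n p α)
      ((-((α - n) ^ (-(1 : ℝ) / (p - 1)) * profile n p α ‖y‖ / ‖y‖)) • y) y := by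
  have h : HasGradientAt (radialSolution n p α) _ y :=
    ((hasDerivAt_integral_profile hp hpn hnα hy).const_mul _).hasGradientAt_comp_norm
      (norm_pos_iff.1 (zero_lt_one.trans hy))
  rwa [mul_neg, neg_div ‖y‖] at h

theorem pFlux_gradient_radialSolution (hp : 1 < p) (hpn : p < n) (hnα : n < α) {y : E}
    (hy : 1 < ‖y‖) :
    pFlux p (gradient (radialSolution n p α) y) = fluxProfile n α ‖y‖ • y := by
  rw [(hasGradientAt_radialSolution hp hpn hnα hy).gradient,
    pFlux_neg_div_smul p (mul_pos (rpow_pos_of_pos (sub_pos.2 hnα) _) (profile_pos hnα hy))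
      (norm_pos_iff.1 (zero_lt_one.trans hy)), fluxProfile_eq_neg_rpow_div hp hnα hy.le]

end RadialSolution

theorem radial_supersolution_general (N : ℕ) (p α : ℝ)
    (hp1 : 1 < p) (hpN : p < N) (hα : (N : ℝ) < α) :
    let g : ℝ → ℝ := fun t => (t ^ (α - N) - 1) ^ (1 / (p - 1)) * t ^ (-(α - 1) / (p - 1))
    let W : EuclideanSpace ℝ (Fin N) → ℝ :=
      fun y => (α - N) ^ (-(1 : ℝ) / (p - 1)) * ∫ t in Set.Ioi ‖y‖, g t
    (∀ y : EuclideanSpace ℝ (Fin N), 1 ≤ ‖y‖ →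
      MeasureTheory.IntegrableOn g (Set.Ioi ‖y‖)) ∧
    (∀ y : EuclideanSpace ℝ (Fin N), 1 ≤ ‖y‖ → 0 < W y) ∧
    (∀ y1 y2 : EuclideanSpace ℝ (Fin N), 1 ≤ ‖y1‖ → ‖y1‖ < ‖y2‖ → W y2 < W y1) ∧
    ContDiffOn ℝ 1 (fun y => (‖gradient W y‖ ^ (p - 2)) • gradient W y)
      {y : EuclideanSpace ℝ (Fin N) | 1 < ‖y‖} ∧
    ∀ y : EuclideanSpace ℝ (Fin N), 1 < ‖y‖ →
      -vecDiv (fun z => (‖gradient W z‖ ^ (p - 2)) • gradient W z) y = ‖y‖ ^ (-α) := by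
  intro g W
  have hc : 0 < (α - N) ^ (-(1 : ℝ) / (p - 1)) := rpow_pos_of_pos (sub_pos.2 hα) _
  have hne : ∀ y : EuclideanSpace ℝ (Fin N), 1 < ‖y‖ → y ≠ 0 :=
    fun y hy => norm_pos_iff.1 (zero_lt_one.trans hy)
  have hflux : ∀ y : EuclideanSpace ℝ (Fin N), 1 < ‖y‖ →
      pFlux p (gradient W y) = fluxProfile N α ‖y‖ • y :=
    fun y hy => pFlux_gradient_radialSolution hp1 hpN hα hy
  refine ⟨fun y hy => integrableOn_profile hp1 hpN hα hy,
    fun y hy => mul_pos hc (integral_profile_pos hp1 hpN hα hy),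
    fun y1 y2 h1 h12 => mul_lt_mul_of_pos_left
      (strictAntiOn_integral_profile hp1 hpN hα h1 (h1.trans h12.le) h12) hc,
    (contDiffOn_fluxProfile_norm_smul.mono hne).congr hflux, fun y hy => ?_⟩
  have hev : (fun z => pFlux p (gradient W z)) =ᶠ[nhds y] fun z => fluxProfile N α ‖z‖ • z :=
    Filter.eventually_of_mem ((isOpen_lt continuous_const continuous_norm).mem_nhds hy) hflux
  change -vecDiv (fun z => pFlux p (gradient W z)) y = _
  rw [hev.vecDiv_eq, vecDiv_comp_norm_smul
      (hasDerivAt_fluxProfile (norm_ne_zero_iff.2 (hne y hy))).differentiableAt (hne y hy),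
    mul_fluxProfile_add_mul_deriv hα.ne (zero_lt_one.trans hy), neg_neg]

/-- The radial function `W(y) = (α−N)^{−1/(p−1)} ∫_{|y|}^∞ (t^{α−N} − 1)^{1/(p−1)}
t^{−(α−1)/(p−1)} dt` is well defined, positive, strictly decreasing in `|y|`, and is a
classical solution of `−Δ_p W = |y|^{−α}` for `|y| > 1`. -/
theorem radial_supersolution (N : ℕ) (hN : 2 ≤ N) (p α : ℝ)
    (hp1 : 1 < p) (hpN : p < N) (hα : (N : ℝ) < α) :
    let g : ℝ → ℝ := fun t => (t ^ (α - N) - 1) ^ (1 / (p - 1)) * t ^ (-(α - 1) / (p - 1))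
    let W : EuclideanSpace ℝ (Fin N) → ℝ :=
      fun y => (α - N) ^ (-(1 : ℝ) / (p - 1)) * ∫ t in Set.Ioi ‖y‖, g t
    (∀ y : EuclideanSpace ℝ (Fin N), 1 ≤ ‖y‖ →
      MeasureTheory.IntegrableOn g (Set.Ioi ‖y‖)) ∧
    (∀ y : EuclideanSpace ℝ (Fin N), 1 ≤ ‖y‖ → 0 < W y) ∧
    (∀ y1 y2 : EuclideanSpace ℝ (Fin N), 1 ≤ ‖y1‖ → ‖y1‖ < ‖y2‖ → W y2 < W y1) ∧
    ContDiffOn ℝ 1 (fun y => (‖gradient W y‖ ^ (p - 2)) • gradient W y)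
      {y : EuclideanSpace ℝ (Fin N) | 1 < ‖y‖} ∧
    ∀ y : EuclideanSpace ℝ (Fin N), 1 < ‖y‖ →
      -vecDiv (fun z => (‖gradient W z‖ ^ (p - 2)) • gradient W z) y = ‖y‖ ^ (-α) :=
  radial_supersolution_general N p α hp1 hpN hα
end
end

section
/- Let N ≥ 2 and 1 < p < N, and set m = p/(p−1) and s = N + 2 − N/p. Then the functions y ↦ (1 + |y|^m)^{−s} and y ↦ |y|^m (1 + |y|^m)^{−s} are integrable on ℝ^N, and ∫_{ℝ^N} |y|^m (1 + |y|^m)^{−s} dy = (N(p−1)/p) ∫_{ℝ^N} (1 + |y|^m)^{−s} dy. Consequently ∫_{ℝ^N} ( |y|^m − (p−1) ) (1 + |y|^m)^{−s} dy = ((N−p)(p−1)/p) ∫_{ℝ^N} (1 + |y|^m)^{−s} dy > 0. -/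
/-!
In polar coordinates both integrals become integrals over `(0, ∞)` against `r^(N-1) dr`. Since
`m s = N + 2m`, the function `F r = r^N (1 + r^m)^(-(s-1))` satisfies
`F' r = r^(N-1) (1 + r^m)^(-s) (N - m r^m)`, and `F` vanishes at `0` and at `∞`; so
`m ∫ |y|^m (1 + |y|^m)^(-s) = N ∫ (1 + |y|^m)^(-s)`, and `N / m = N(p-1)/p`.
Integrability follows from the Japanese bracket bound `(1 + t^m)^(-σ) ≤ 2^(mσ) (1 + t)^(-mσ)`.
-/

open MeasureTheory Real

open Set Filter Topology Module

lemma Real.add_rpow_le_two_rpow_mul_rpow_add_rpow {a b p : ℝ} (ha : 0 ≤ a) (hb : 0 ≤ b)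
    (hp : 0 ≤ p) : (a + b) ^ p ≤ 2 ^ p * (a ^ p + b ^ p) := calc
  (a + b) ^ p ≤ (2 * max a b) ^ p := by gcongr; rw [two_mul]; gcongr <;> simp
  _ = 2 ^ p * max a b ^ p := mul_rpow zero_le_two (le_max_of_le_left ha)
  _ ≤ 2 ^ p * (a ^ p + b ^ p) := by
    gcongr
    rcases le_total a b with h | h
    · rw [max_eq_right h]; linarith [rpow_nonneg ha p]
    · rw [max_eq_left h]; linarith [rpow_nonneg hb p]

lemma one_add_rpow_rpow_neg_le {m σ t : ℝ} (hm : 0 ≤ m) (hσ : 0 ≤ σ) (ht : 0 ≤ t) :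
    (1 + t ^ m) ^ (-σ) ≤ 2 ^ (m * σ) * (1 + t) ^ (-(m * σ)) := by
  have h2m : (0 : ℝ) < 2 ^ m := by positivity
  have hle : 2 ^ (-m) * (1 + t) ^ m ≤ 1 + t ^ m := by
    rw [rpow_neg zero_le_two, inv_mul_le_iff₀ h2m]
    simpa using add_rpow_le_two_rpow_mul_rpow_add_rpow zero_le_one ht hm
  calc (1 + t ^ m) ^ (-σ) ≤ (2 ^ (-m) * (1 + t) ^ m) ^ (-σ) :=
        rpow_le_rpow_of_nonpos (by positivity) hle (neg_nonpos.2 hσ)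
    _ = 2 ^ (m * σ) * (1 + t) ^ (-(m * σ)) := by
        rw [mul_rpow (by positivity) (by positivity), ← rpow_mul zero_le_two,
          ← rpow_mul (by positivity)]
        ring_nf

lemma tendsto_pow_mul_one_add_rpow_rpow_neg_atTop {n : ℕ} {m σ : ℝ} (hm : 0 < m)
    (hn : n < m * σ) : Tendsto (fun r : ℝ => r ^ n * (1 + r ^ m) ^ (-σ)) atTop (𝓝 0) := by
  have hσ : 0 ≤ σ := nonneg_of_mul_nonneg_right (by linarith [n.cast_nonneg (α := ℝ)]) hm
  refine tendsto_of_tendsto_of_tendsto_of_le_of_le' tendsto_const_nhds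
    (tendsto_rpow_neg_atTop (sub_pos.2 hn)) ?_ ?_
  · filter_upwards [eventually_ge_atTop 0] with r hr
    positivity
  · filter_upwards [eventually_gt_atTop 0] with r hr
    calc r ^ n * (1 + r ^ m) ^ (-σ) ≤ r ^ (n : ℝ) * (r ^ m) ^ (-σ) := by
          rw [rpow_natCast]
          exact mul_le_mul_of_nonneg_left (rpow_le_rpow_of_nonpos (by positivity)
            (le_add_of_nonneg_left zero_le_one) (neg_nonpos.2 hσ)) (by positivity)
      _ = r ^ (-(m * σ - n)) := by
          rw [← rpow_mul hr.le, ← rpow_add hr]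
          ring_nf

lemma integral_Ioi_pow_mul_rpow_mul_one_add_rpow_rpow_neg {n : ℕ} (hn : n ≠ 0) {m s : ℝ}
    (hm : 0 < m) (hms : m * s = n + 2 * m)
    (h0 : IntegrableOn (fun r : ℝ => r ^ (n - 1) * (1 + r ^ m) ^ (-s)) (Ioi 0))
    (h1 : IntegrableOn (fun r : ℝ => r ^ (n - 1) * (r ^ m * (1 + r ^ m) ^ (-s))) (Ioi 0)) :
    m * ∫ r in Ioi 0, r ^ (n - 1) * (r ^ m * (1 + r ^ m) ^ (-s)) =
      n * ∫ r in Ioi 0, r ^ (n - 1) * (1 + r ^ m) ^ (-s) := by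
  set F : ℝ → ℝ := fun r => r ^ n * (1 + r ^ m) ^ (-(s - 1))
  have hderiv : ∀ r ∈ Ioi (0 : ℝ), HasDerivAt F
      (n * (r ^ (n - 1) * (1 + r ^ m) ^ (-s)) - m * (r ^ (n - 1) * (r ^ m * (1 + r ^ m) ^ (-s))))
      r := by
    intro r (hr : 0 < r)
    have hbase : 0 < 1 + r ^ m := by positivity
    have hpow : HasDerivAt (fun r : ℝ => 1 + r ^ m) (m * r ^ (m - 1)) r :=
      (hasDerivAt_rpow_const (Or.inl hr.ne')).const_add 1
    refine ((hasDerivAt_pow n r).mul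
      (hpow.rpow_const (p := -(s - 1)) (Or.inl hbase.ne'))).congr_deriv ?_
    have hshift : (1 + r ^ m) ^ (-(s - 1)) = (1 + r ^ m) * (1 + r ^ m) ^ (-s) := by
      rw [show -(s - 1) = 1 + -s by ring, rpow_add hbase, rpow_one]
    have hexp : r ^ n * r ^ (m - 1) = r ^ (n - 1) * r ^ m := by
      rw [← pow_sub_one_mul hn, mul_assoc, rpow_sub_one hr.ne', mul_div_cancel₀ _ hr.ne']
    rw [show -(s - 1) - 1 = -s by ring, hshift]
    have hms' : m * (s - 1) = n + m := by linear_combination hms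
    linear_combination (-(s - 1) * m * (1 + r ^ m) ^ (-s)) * hexp -
      (r ^ (n - 1) * r ^ m * (1 + r ^ m) ^ (-s)) * hms'
  have hcont : ContinuousWithinAt F (Ici 0) 0 :=
    ((continuous_pow n).continuousAt.mul
      ((continuousAt_const.add (continuousAt_rpow_const 0 m (Or.inr hm.le))).rpow_const
        (Or.inl (by simp [zero_rpow hm.ne'])))).continuousWithinAt
  have hlim : Tendsto F atTop (𝓝 0) :=
    tendsto_pow_mul_one_add_rpow_rpow_neg_atTop hm (by linarith)
  have hFTC := integral_Ioi_of_hasDerivAt_of_tendsto hcont hderiv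
    ((h0.const_mul _).sub (h1.const_mul _)) hlim
  rw [integral_sub (h0.const_mul _) (h1.const_mul _), integral_const_mul,
    integral_const_mul] at hFTC
  simp only [F, ne_eq, hn, not_false_eq_true, zero_pow, zero_mul, sub_zero] at hFTC
  linarith

section Radial

variable {E : Type*} [NormedAddCommGroup E] [NormedSpace ℝ E] [FiniteDimensional ℝ E]
  [MeasurableSpace E] [BorelSpace E] (μ : Measure E) [μ.IsAddHaarMeasure]

lemma integrable_one_add_norm_rpow_rpow_neg {m σ : ℝ} (hm : 0 < m)
    (hσ : (finrank ℝ E : ℝ) < m * σ) :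
    Integrable (fun x : E => (1 + ‖x‖ ^ m) ^ (-σ)) μ := by
  have hσ0 : 0 ≤ σ :=
    nonneg_of_mul_nonneg_right (by linarith [(finrank ℝ E).cast_nonneg (α := ℝ)]) hm
  refine ((integrable_one_add_norm hσ).const_mul (2 ^ (m * σ))).mono'
    (Measurable.aestronglyMeasurable (by fun_prop)) (.of_forall fun x => ?_)
  rw [norm_of_nonneg (by positivity)]
  exact one_add_rpow_rpow_neg_le hm.le hσ0 (norm_nonneg x)

lemma integrable_norm_rpow_mul_one_add_norm_rpow_rpow_neg {m s : ℝ} (hm : 0 < m)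
    (hs : (finrank ℝ E : ℝ) < m * (s - 1)) :
    Integrable (fun x : E => ‖x‖ ^ m * (1 + ‖x‖ ^ m) ^ (-s)) μ := by
  refine (integrable_one_add_norm_rpow_rpow_neg μ hm hs).mono'
    (Measurable.aestronglyMeasurable (by fun_prop)) (.of_forall fun x => ?_)
  have hpos : 0 < 1 + ‖x‖ ^ m := by positivity
  rw [norm_of_nonneg (by positivity), show -(s - 1) = 1 + -s by ring, rpow_add hpos, rpow_one]
  gcongr
  linarith

lemma integral_one_add_norm_rpow_rpow_neg_pos {m σ : ℝ} (hm : 0 < m)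
    (hσ : (finrank ℝ E : ℝ) < m * σ) :
    0 < ∫ x, (1 + ‖x‖ ^ m) ^ (-σ) ∂μ := by
  rw [integral_pos_iff_support_of_nonneg (fun x => by positivity)
    (integrable_one_add_norm_rpow_rpow_neg μ hm hσ)]
  have hsupp : Function.support (fun x : E => (1 + ‖x‖ ^ m) ^ (-σ)) = univ :=
    eq_univ_of_forall fun x => (rpow_pos_of_pos (by positivity) _).ne'
  rw [hsupp]
  exact isOpen_univ.measure_pos μ univ_nonempty

lemma integral_norm_rpow_mul_one_add_norm_rpow_rpow_neg [Nontrivial E] {m s : ℝ} (hm : 0 < m)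
    (hms : m * s = finrank ℝ E + 2 * m) :
    m * ∫ x, ‖x‖ ^ m * (1 + ‖x‖ ^ m) ^ (-s) ∂μ =
      finrank ℝ E * ∫ x, (1 + ‖x‖ ^ m) ^ (-s) ∂μ := by
  have h0 := (integrable_fun_norm_addHaar μ (f := fun r => (1 + r ^ m) ^ (-s))).1
    (integrable_one_add_norm_rpow_rpow_neg μ hm (by linarith))
  have h1 := (integrable_fun_norm_addHaar μ (f := fun r => r ^ m * (1 + r ^ m) ^ (-s))).1
    (integrable_norm_rpow_mul_one_add_norm_rpow_rpow_neg μ hm (by linarith))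
  simp only [smul_eq_mul] at h0 h1
  rw [integral_fun_norm_addHaar μ (fun r => (1 + r ^ m) ^ (-s)),
    integral_fun_norm_addHaar μ (fun r => r ^ m * (1 + r ^ m) ^ (-s))]
  simp only [smul_eq_mul, nsmul_eq_mul]
  linear_combination (finrank ℝ E * μ.real (Metric.ball 0 1)) *
    integral_Ioi_pow_mul_rpow_mul_one_add_rpow_rpow_neg finrank_pos.ne' hm hms h0 h1

end Radial

/-- With `m = p/(p−1)` and `s = N + 2 − N/p`, the functions `(1+|y|^m)^{−s}` and
`|y|^m (1+|y|^m)^{−s}` are integrable on `ℝ^N`, with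
`∫ |y|^m (1+|y|^m)^{−s} = (N(p−1)/p) ∫ (1+|y|^m)^{−s}`; consequently
`∫ (|y|^m − (p−1)) (1+|y|^m)^{−s} = ((N−p)(p−1)/p) ∫ (1+|y|^m)^{−s} > 0`. -/
theorem pohozaev_constant_integrals (N : ℕ) (hN : 2 ≤ N) (p : ℝ)
    (hp1 : 1 < p) (hpN : p < N) :
    let m : ℝ := p / (p - 1)
    let s : ℝ := (N : ℝ) + 2 - (N : ℝ) / p
    Integrable (fun y : EuclideanSpace ℝ (Fin N) => (1 + ‖y‖ ^ m) ^ (-s)) ∧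
    Integrable (fun y : EuclideanSpace ℝ (Fin N) => ‖y‖ ^ m * (1 + ‖y‖ ^ m) ^ (-s)) ∧
    (∫ y : EuclideanSpace ℝ (Fin N), ‖y‖ ^ m * (1 + ‖y‖ ^ m) ^ (-s)) =
      ((N : ℝ) * (p - 1) / p) *
        (∫ y : EuclideanSpace ℝ (Fin N), (1 + ‖y‖ ^ m) ^ (-s)) ∧
    (∫ y : EuclideanSpace ℝ (Fin N), (‖y‖ ^ m - (p - 1)) * (1 + ‖y‖ ^ m) ^ (-s)) =
      (((N : ℝ) - p) * (p - 1) / p) *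
        (∫ y : EuclideanSpace ℝ (Fin N), (1 + ‖y‖ ^ m) ^ (-s)) ∧
    0 < ∫ y : EuclideanSpace ℝ (Fin N), (‖y‖ ^ m - (p - 1)) * (1 + ‖y‖ ^ m) ^ (-s) := by
  intro m s
  have hp : 0 < p - 1 := by linarith
  have hm : 0 < m := by positivity
  have hdim : finrank ℝ (EuclideanSpace ℝ (Fin N)) = N := finrank_euclideanSpace_fin
  have hms : m * s = finrank ℝ (EuclideanSpace ℝ (Fin N)) + 2 * m := by
    rw [hdim]
    simp only [m, s]
    field_simp
    ring
  have hnontrivial : Nontrivial (EuclideanSpace ℝ (Fin N)) := by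
    have : Nonempty (Fin N) := ⟨⟨0, by omega⟩⟩
    infer_instance
  have hint0 := integrable_one_add_norm_rpow_rpow_neg volume hm (σ := s) (by linarith)
  have hint1 := integrable_norm_rpow_mul_one_add_norm_rpow_rpow_neg volume hm (s := s)
    (by linarith)
  have hpos := integral_one_add_norm_rpow_rpow_neg_pos volume hm (σ := s) (by linarith)
  have hmoment := integral_norm_rpow_mul_one_add_norm_rpow_rpow_neg volume hm hms
  rw [hdim] at hmoment
  have hratio : (∫ y : EuclideanSpace ℝ (Fin N), ‖y‖ ^ m * (1 + ‖y‖ ^ m) ^ (-s)) =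
      ((N : ℝ) * (p - 1) / p) * ∫ y : EuclideanSpace ℝ (Fin N), (1 + ‖y‖ ^ m) ^ (-s) := by
    rw [← mul_right_inj' hm.ne', hmoment]
    simp only [m]
    field_simp
  have hshifted :
      (∫ y : EuclideanSpace ℝ (Fin N), (‖y‖ ^ m - (p - 1)) * (1 + ‖y‖ ^ m) ^ (-s)) =
        (((N : ℝ) - p) * (p - 1) / p) *
          ∫ y : EuclideanSpace ℝ (Fin N), (1 + ‖y‖ ^ m) ^ (-s) := by
    simp only [sub_mul _ (p - 1)]
    rw [integral_sub hint1 (hint0.const_mul _), integral_const_mul, hratio]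
    field_simp
  refine ⟨hint0, hint1, hratio, hshifted, hshifted ▸ mul_pos ?_ hpos⟩
  exact div_pos (mul_pos (by linarith) hp) (by linarith)
end

section
/- Let N ≥ 2, 2 ≤ p < N, x_0 ∈ ℝ^N and ε > 0, and let Γ_ε(x) = C_0 (ε^p + |x − x_0|^{p/(p−1)})^{−(N−p)/p}, where C_0 = ((p−1)/(N−p))(N ω_N)^{−1/(p−1)} and C_1 = N^{(N−p)/p²} ((N−p)/(p−1))^{((p−1)(N−p))/p²}. Then Γ_ε is of class C¹ on ℝ^N, the vector field |∇Γ_ε|^{p−2}∇Γ_ε is of class C¹ on ℝ^N \ {x_0}, for every x ≠ x_0 one has −div(|∇Γ_ε|^{p−2}∇Γ_ε)(x) = C_0^{p−1} C_1^{p²/(N−p)} ε^p (ε^p + |x − x_0|^{p/(p−1)})^{−(N − (N−p)/p)} =: f_ε(x), and for every φ ∈ C_c^∞(ℝ^N) one has ∫_{ℝ^N} |∇Γ_ε|^{p−2} ⟨∇Γ_ε, ∇φ⟩ dx = ∫_{ℝ^N} f_ε φ dx. -/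
/-!
Put `q = p / (p - 1)`, `α = (N - p) / p`, `β = (α + 1)(p - 1)` and `A = ε^p + |x - x₀|^q`. Then
`∇Γ_ε = -C₀ α q A^{-α-1} |x - x₀|^{q-2} (x - x₀)`, and since `v ↦ |v|^{q-2} v` and
`w ↦ |w|^{p-2} w` are mutually inverse for conjugate exponents, the flux
`|∇Γ_ε|^{p-2} ∇Γ_ε = -(C₀ α q)^{p-1} A^{-β} (x - x₀)` is a `C¹` radial field, also at `x₀`.
The product rule `div (h • (x - x₀)) = N h + ⟨∇h, x - x₀⟩` and the identity `β q = N` leave only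
the `ε^p` part of `A`, which gives `f_ε`; the weak form is integration by parts in each coordinate.
-/

open MeasureTheory Real
open scoped RealInnerProductSpace

noncomputable section

theorem rpow_sub_two_mul_sq {r q : ℝ} (hr : 0 ≤ r) (hq : q ≠ 0) :
    r ^ (q - 2) * r ^ 2 = r ^ q := by
  rcases hr.eq_or_lt with rfl | hr
  · simp [zero_rpow hq]
  rw [← rpow_natCast, ← rpow_add hr]
  norm_num

section InnerProductSpace

variable {F : Type*} [NormedAddCommGroup F] [InnerProductSpace ℝ F]

theorem norm_rpow_smul_norm_rpow_smul {p q : ℝ} (hpq : p.HolderConjugate q) (v : F) :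
    ‖‖v‖ ^ (q - 2) • v‖ ^ (p - 2) • (‖v‖ ^ (q - 2) • v) = v := by
  rcases eq_or_ne v 0 with rfl | hv
  · simp
  have hr : 0 < ‖v‖ := norm_pos_iff.2 hv
  have hscalar : (‖v‖ ^ (q - 2) * ‖v‖) ^ (p - 2) * ‖v‖ ^ (q - 2) = 1 := by
    rw [← rpow_add_one hr.ne', ← rpow_mul hr.le, ← rpow_add hr,
      show (q - 2 + 1) * (p - 2) + (q - 2) = 0 by linear_combination hpq.mul_eq_add, rpow_zero]
  rw [norm_smul, norm_of_nonneg (rpow_nonneg hr.le _), smul_smul, hscalar, one_smul]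

theorem norm_smul_rpow_smul_of_nonneg {p : ℝ} (hp : p ≠ 1) {b : ℝ} (hb : 0 ≤ b) (w : F) :
    ‖b • w‖ ^ (p - 2) • (b • w) = b ^ (p - 1) • (‖w‖ ^ (p - 2) • w) := by
  rcases hb.eq_or_lt with rfl | hb
  · simp [zero_rpow (sub_ne_zero.2 hp)]
  rw [norm_smul, norm_of_nonneg hb.le, mul_rpow hb.le (norm_nonneg _), smul_smul, smul_smul,
    show p - 1 = p - 2 + 1 by ring, rpow_add_one hb.ne']
  congr 1
  ring

variable {a q : ℝ}

theorem contDiff_const_mul_add_norm_sub_rpow_rpow (ha : 0 < a) (hq : 1 < q) (c γ : ℝ) (x0 : F) :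
    ContDiff ℝ 1 (fun y => c * (a + ‖y - x0‖ ^ q) ^ γ) :=
  contDiff_const.mul <| (contDiff_const.add
    ((contDiff_id.sub contDiff_const).norm_rpow hq)).rpow_const_of_ne fun _ => by positivity

variable [CompleteSpace F]

theorem hasGradientAt_const_mul_add_norm_sub_rpow_rpow (ha : 0 < a) (hq : 1 < q)
    (c γ : ℝ) (x0 x : F) :
    HasGradientAt (fun y => c * (a + ‖y - x0‖ ^ q) ^ γ)
      ((c * γ * q * (a + ‖x - x0‖ ^ q) ^ (γ - 1) * ‖x - x0‖ ^ (q - 2)) • (x - x0)) x := by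
  have hA : a + ‖x - x0‖ ^ q ≠ 0 := by positivity
  have hbase : HasFDerivAt (fun y => a + ‖y - x0‖ ^ q)
      ((q * ‖x - x0‖ ^ (q - 2)) • innerSL ℝ (x - x0)) x := by
    simpa using ((hasFDerivAt_norm_rpow (x - x0) hq).comp x
      ((hasFDerivAt_id x).sub_const x0)).const_add a
  rw [hasGradientAt_iff_hasFDerivAt]
  refine ((hbase.rpow_const (p := γ) (Or.inl hA)).const_mul c).congr_fderiv
    (ContinuousLinearMap.ext fun w => ?_)
  simp only [map_sub, smul_apply, sub_apply, coe_innerSL_apply, smul_eq_mul, map_smul,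
    InnerProductSpace.toDual_apply_apply]
  ring

theorem norm_gradient_rpow_smul_gradient {p c α : ℝ} (hpq : p.HolderConjugate q)
    (ha : 0 < a) (hc : 0 ≤ c) (hα : 0 ≤ α) (x0 x : F) :
    ‖gradient (fun y => c * (a + ‖y - x0‖ ^ q) ^ (-α)) x‖ ^ (p - 2) •
        gradient (fun y => c * (a + ‖y - x0‖ ^ q) ^ (-α)) x =
      (-(c * α * q) ^ (p - 1) * (a + ‖x - x0‖ ^ q) ^ (-((α + 1) * (p - 1)))) • (x - x0) := by
  have hA : 0 < a + ‖x - x0‖ ^ q := by positivity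
  have hcαq : 0 ≤ c * α * q := mul_nonneg (mul_nonneg hc hα) hpq.symm.nonneg
  have hb : 0 ≤ c * α * q * (a + ‖x - x0‖ ^ q) ^ (-α - 1) := mul_nonneg hcαq (rpow_nonneg hA.le _)
  have hgrad : (c * -α * q * (a + ‖x - x0‖ ^ q) ^ (-α - 1) * ‖x - x0‖ ^ (q - 2)) • (x - x0) =
      -((c * α * q * (a + ‖x - x0‖ ^ q) ^ (-α - 1)) • (‖x - x0‖ ^ (q - 2) • (x - x0))) := by
    rw [smul_smul, ← neg_smul]
    congr 1
    ring
  rw [(hasGradientAt_const_mul_add_norm_sub_rpow_rpow ha hpq.symm.lt c (-α) x0 x).gradient,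
    hgrad, norm_neg, smul_neg, norm_smul_rpow_smul_of_nonneg hpq.lt.ne' hb,
    norm_rpow_smul_norm_rpow_smul hpq, ← neg_smul, mul_rpow hcαq (rpow_nonneg hA.le _),
    ← rpow_mul hA.le, show (-α - 1) * (p - 1) = -((α + 1) * (p - 1)) by ring, neg_mul]

end InnerProductSpace

section EuclideanSpace

variable {N : ℕ}

local notation "E" => EuclideanSpace ℝ (Fin N)

theorem sum_apply_single_mul (L : E →L[ℝ] ℝ) (w : E) :
    ∑ i, L (EuclideanSpace.single i 1) * w i = L w := by
  conv_rhs => rw [← (EuclideanSpace.basisFun (Fin N) ℝ).sum_repr w]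
  simp [mul_comm]

theorem inner_gradient_eq_sum_mul_fderiv (φ : E → ℝ) (v x : E) :
    ⟪v, gradient φ x⟫ = ∑ i, v i * fderiv ℝ φ x (EuclideanSpace.single i 1) := by
  rw [real_inner_comm, gradient, InnerProductSpace.toDual_symm_apply, ← sum_apply_single_mul]
  simp_rw [mul_comm]

theorem vecDiv_eq_sum_fderiv_apply {V : E → E} {x : E} (hV : DifferentiableAt ℝ V x) :
    vecDiv V x = ∑ i, fderiv ℝ (fun y => V y i) x (EuclideanSpace.single i 1) := by
  refine Finset.sum_congr rfl fun i _ => ?_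
  have hVi : HasFDerivAt (fun y => V y i) ((EuclideanSpace.proj i).comp (fderiv ℝ V x)) x :=
    (EuclideanSpace.proj (𝕜 := ℝ) i).hasFDerivAt.comp x hV.hasFDerivAt
  simp [hVi.fderiv, EuclideanSpace.inner_single_right]

theorem vecDiv_smul {h : E → ℝ} {W : E → E} {x : E} (hh : DifferentiableAt ℝ h x)
    (hW : DifferentiableAt ℝ W x) :
    vecDiv (fun y => h y • W y) x = h x * vecDiv W x + ⟪gradient h x, W x⟫ := by
  simp [vecDiv, fderiv_fun_smul hh hW, inner_add_left, Finset.mul_sum, Finset.sum_add_distrib,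
    gradient, EuclideanSpace.inner_single_right, sum_apply_single_mul]

theorem vecDiv_sub_const (x0 x : E) : vecDiv (fun y => y - x0) x = N := by
  simp [vecDiv, fderiv_sub_const]

theorem integral_inner_gradient_eq_neg_integral_vecDiv_mul {V : E → E} {φ : E → ℝ}
    (hV : ContDiff ℝ 1 V) (hφ : ContDiff ℝ 1 φ) (hφc : HasCompactSupport φ) :
    ∫ x, ⟪V x, gradient φ x⟫ = -∫ x, vecDiv V x * φ x := by
  have hV_coord : ∀ i, ContDiff ℝ 1 fun x => V x i :=
    fun i => (EuclideanSpace.proj (𝕜 := ℝ) i).contDiff.comp hV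
  have hint : ∀ {f g : E → ℝ}, Continuous f → Continuous g → HasCompactSupport g →
      Integrable (fun x => f x * g x) := fun hf hg hgc =>
    (hf.mul hg).integrable_of_hasCompactSupport hgc.mul_left
  have hφ' : ∀ v, Continuous fun x => fderiv ℝ φ x v := fun v =>
    (hφ.continuous_fderiv one_ne_zero).clm_apply continuous_const
  have hV' : ∀ i v, Continuous fun x => fderiv ℝ (fun y => V y i) x v := fun i v =>
    ((hV_coord i).continuous_fderiv one_ne_zero).clm_apply continuous_const
  have hVφ' : ∀ i, Integrable fun x => V x i * fderiv ℝ φ x (EuclideanSpace.single i 1) :=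
    fun i => hint (hV_coord i).continuous (hφ' _) (hφc.fderiv_apply (𝕜 := ℝ) _)
  have hV'φ : ∀ i,
      Integrable fun x => fderiv ℝ (fun y => V y i) x (EuclideanSpace.single i 1) * φ x :=
    fun i => hint (hV' i _) hφ.continuous hφc
  simp_rw [inner_gradient_eq_sum_mul_fderiv,
    vecDiv_eq_sum_fderiv_apply (hV.differentiable one_ne_zero _), Finset.sum_mul]
  rw [integral_finsetSum _ fun i _ => hVφ' i, integral_finsetSum _ fun i _ => hV'φ i,
    ← Finset.sum_neg_distrib]
  exact Finset.sum_congr rfl fun i _ => integral_mul_fderiv_eq_neg_fderiv_mul_of_integrable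
    (hV'φ i) (hVφ' i) (hint (hV_coord i).continuous hφ.continuous hφc)
    (fun x _ => (hV_coord i).differentiable one_ne_zero x)
    (fun x _ => hφ.differentiable one_ne_zero x)

theorem vecDiv_const_mul_add_norm_sub_rpow_rpow_smul_sub {a q : ℝ} (ha : 0 < a) (hq : 1 < q)
    (c β : ℝ) (x0 x : E) :
    vecDiv (fun y => (c * (a + ‖y - x0‖ ^ q) ^ (-β)) • (y - x0)) x =
      c * (a + ‖x - x0‖ ^ q) ^ (-β - 1) * (N * a + (N - β * q) * ‖x - x0‖ ^ q) := by
  have hgrad := hasGradientAt_const_mul_add_norm_sub_rpow_rpow ha hq c (-β) x0 x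
  have hA : 0 < a + ‖x - x0‖ ^ q := by positivity
  have hA_rpow : (a + ‖x - x0‖ ^ q) ^ (-β) =
      (a + ‖x - x0‖ ^ q) ^ (-β - 1) * (a + ‖x - x0‖ ^ q) := by
    rw [← rpow_add_one hA.ne', sub_add_cancel]
  have hr_rpow := rpow_sub_two_mul_sq (norm_nonneg (x - x0)) (by linarith : q ≠ 0)
  rw [vecDiv_smul hgrad.differentiableAt (by fun_prop), vecDiv_sub_const,
    hgrad.gradient, real_inner_smul_left, real_inner_self_eq_norm_sq]
  linear_combination (c * N) * hA_rpow - (c * β * q * (a + ‖x - x0‖ ^ q) ^ (-β - 1)) * hr_rpow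

end EuclideanSpace

theorem pLaplace_bubble_constant_eq {N p C : ℝ} (hp : 1 < p) (hpN : p < N) (hC : 0 ≤ C) :
    (C * ((N - p) / p) * (p / (p - 1))) ^ (p - 1) * N =
      C ^ (p - 1) * (N ^ ((N - p) / p ^ 2) *
        ((N - p) / (p - 1)) ^ ((p - 1) * (N - p) / p ^ 2)) ^ (p ^ 2 / (N - p)) := by
  have hN : 0 ≤ N := by linarith
  have hd : 0 ≤ (N - p) / (p - 1) := div_nonneg (by linarith) (by linarith)
  have hNp : N - p ≠ 0 := by linarith
  have hp0 : p ≠ 0 := by linarith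
  rw [mul_rpow (rpow_nonneg hN _) (rpow_nonneg hd _), ← rpow_mul hN, ← rpow_mul hd,
    show (N - p) / p ^ 2 * (p ^ 2 / (N - p)) = 1 by field_simp,
    show (p - 1) * (N - p) / p ^ 2 * (p ^ 2 / (N - p)) = p - 1 by field_simp, rpow_one,
    show C * ((N - p) / p) * (p / (p - 1)) = C * ((N - p) / (p - 1)) by field_simp,
    mul_rpow hC hd]
  ring

theorem regularized_fundamental_solution_general (N : ℕ) (p : ℝ)
    (hp2 : 2 ≤ p) (hpN : p < N) (x0 : EuclideanSpace ℝ (Fin N)) (ε : ℝ) (hε : 0 < ε) :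
    let ωN : ℝ := (volume (Metric.ball (0 : EuclideanSpace ℝ (Fin N)) 1)).toReal
    let C0 : ℝ := ((p - 1) / ((N : ℝ) - p)) * ((N : ℝ) * ωN) ^ (-(1 : ℝ) / (p - 1))
    let C1 : ℝ := (N : ℝ) ^ (((N : ℝ) - p) / p ^ 2) *
      (((N : ℝ) - p) / (p - 1)) ^ ((p - 1) * ((N : ℝ) - p) / p ^ 2)
    let Γε : EuclideanSpace ℝ (Fin N) → ℝ :=
      fun x => C0 * (ε ^ p + ‖x - x0‖ ^ (p / (p - 1))) ^ (-(((N : ℝ) - p) / p))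
    let fε : EuclideanSpace ℝ (Fin N) → ℝ :=
      fun x => C0 ^ (p - 1) * C1 ^ (p ^ 2 / ((N : ℝ) - p)) * ε ^ p *
        (ε ^ p + ‖x - x0‖ ^ (p / (p - 1))) ^ (-((N : ℝ) - ((N : ℝ) - p) / p))
    ContDiff ℝ 1 Γε ∧
    ContDiffOn ℝ 1 (fun x => (‖gradient Γε x‖ ^ (p - 2)) • gradient Γε x) {x0}ᶜ ∧
    (∀ x : EuclideanSpace ℝ (Fin N), x ≠ x0 →
      -vecDiv (fun z => (‖gradient Γε z‖ ^ (p - 2)) • gradient Γε z) x = fε x) ∧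
    ∀ φ : EuclideanSpace ℝ (Fin N) → ℝ, ContDiff ℝ (⊤ : ℕ∞) φ → HasCompactSupport φ →
      (∫ x, (‖gradient Γε x‖ ^ (p - 2)) * ⟪gradient Γε x, gradient φ x⟫)
        = ∫ x, fε x * φ x := by
  intro ωN C0 C1 Γε fε
  have hC0 : 0 ≤ C0 := mul_nonneg (div_nonneg (by linarith) (by linarith))
    (rpow_nonneg (mul_nonneg (Nat.cast_nonneg N) ENNReal.toReal_nonneg) _)
  have hεp : 0 < ε ^ p := rpow_pos_of_pos hε p
  have hpq : p.HolderConjugate (p / (p - 1)) := .conjExponent (by linarith)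
  have hq := hpq.symm.lt
  have hp0 := hpq.ne_zero
  have hβq : (((N : ℝ) - p) / p + 1) * (p - 1) * (p / (p - 1)) = N := by
    rw [mul_assoc, hpq.sub_one_mul_conj]; field_simp; ring
  have hexp : -((((N : ℝ) - p) / p + 1) * (p - 1)) - 1 = -((N : ℝ) - ((N : ℝ) - p) / p) := by
    field_simp; ring
  have hflux : (fun z => ‖gradient Γε z‖ ^ (p - 2) • gradient Γε z) = fun x =>
      (-(C0 * (((N : ℝ) - p) / p) * (p / (p - 1))) ^ (p - 1) *
        (ε ^ p + ‖x - x0‖ ^ (p / (p - 1))) ^ (-((((N : ℝ) - p) / p + 1) * (p - 1)))) • (x - x0) :=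
    funext <| norm_gradient_rpow_smul_gradient hpq hεp hC0
      (div_nonneg (by linarith) (by linarith)) x0
  have hflux_smooth : ContDiff ℝ 1 fun z => ‖gradient Γε z‖ ^ (p - 2) • gradient Γε z :=
    hflux ▸ (contDiff_const_mul_add_norm_sub_rpow_rpow hεp hq _ _ x0).smul
      (contDiff_id.sub contDiff_const)
  have hdiv : ∀ x, -vecDiv (fun z => ‖gradient Γε z‖ ^ (p - 2) • gradient Γε z) x = fε x := by
    intro x
    rw [hflux, vecDiv_const_mul_add_norm_sub_rpow_rpow_smul_sub hεp hq, hβq, hexp]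
    simp only [fε, C1, ← pLaplace_bubble_constant_eq (by linarith) hpN hC0]
    ring
  refine ⟨contDiff_const_mul_add_norm_sub_rpow_rpow hεp hq _ _ x0, hflux_smooth.contDiffOn,
    fun x _ => hdiv x, fun φ hφ hφc => ?_⟩
  simp_rw [← real_inner_smul_left]
  rw [integral_inner_gradient_eq_neg_integral_vecDiv_mul hflux_smooth
    (hφ.of_le (by exact_mod_cast le_top)) hφc, ← integral_neg]
  congr 1 with x
  rw [← hdiv x, neg_mul]

/-- The regularized fundamental solution `Γ_ε(x) = C₀ (ε^p + |x−x₀|^{p/(p−1)})^{−(N−p)/p}` is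
`C¹` on `ℝ^N`, the field `|∇Γ_ε|^{p−2}∇Γ_ε` is `C¹` away from `x₀`, and
`−Δ_p Γ_ε = f_ε` with `f_ε(x) = C₀^{p−1} C₁^{p²/(N−p)} ε^p
(ε^p + |x−x₀|^{p/(p−1)})^{−(N−(N−p)/p)}`, both pointwise and in the weak sense. -/
theorem regularized_fundamental_solution (N : ℕ) (hN : 2 ≤ N) (p : ℝ)
    (hp2 : 2 ≤ p) (hpN : p < N) (x0 : EuclideanSpace ℝ (Fin N)) (ε : ℝ) (hε : 0 < ε) :
    let ωN : ℝ := (volume (Metric.ball (0 : EuclideanSpace ℝ (Fin N)) 1)).toReal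
    let C0 : ℝ := ((p - 1) / ((N : ℝ) - p)) * ((N : ℝ) * ωN) ^ (-(1 : ℝ) / (p - 1))
    let C1 : ℝ := (N : ℝ) ^ (((N : ℝ) - p) / p ^ 2) *
      (((N : ℝ) - p) / (p - 1)) ^ ((p - 1) * ((N : ℝ) - p) / p ^ 2)
    let Γε : EuclideanSpace ℝ (Fin N) → ℝ :=
      fun x => C0 * (ε ^ p + ‖x - x0‖ ^ (p / (p - 1))) ^ (-(((N : ℝ) - p) / p))
    let fε : EuclideanSpace ℝ (Fin N) → ℝ :=
      fun x => C0 ^ (p - 1) * C1 ^ (p ^ 2 / ((N : ℝ) - p)) * ε ^ p *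
        (ε ^ p + ‖x - x0‖ ^ (p / (p - 1))) ^ (-((N : ℝ) - ((N : ℝ) - p) / p))
    ContDiff ℝ 1 Γε ∧
    ContDiffOn ℝ 1 (fun x => (‖gradient Γε x‖ ^ (p - 2)) • gradient Γε x) {x0}ᶜ ∧
    (∀ x : EuclideanSpace ℝ (Fin N), x ≠ x0 →
      -vecDiv (fun z => (‖gradient Γε z‖ ^ (p - 2)) • gradient Γε z) x = fε x) ∧
    ∀ φ : EuclideanSpace ℝ (Fin N) → ℝ, ContDiff ℝ (⊤ : ℕ∞) φ → HasCompactSupport φ →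
      (∫ x, (‖gradient Γε x‖ ^ (p - 2)) * ⟪gradient Γε x, gradient φ x⟫)
        = ∫ x, fε x * φ x :=
  regularized_fundamental_solution_general N p hp2 hpN x0 ε hε

end
end

section
/- Let N ≥ 2, 2 ≤ p < N, x_0 ∈ ℝ^N, and for ε > 0 let f_ε(x) = C_0^{p−1} C_1^{p²/(N−p)} ε^p (ε^p + |x − x_0|^{p/(p−1)})^{−(N − (N−p)/p)}, where C_0 = ((p−1)/(N−p))(N ω_N)^{−1/(p−1)} and C_1 = N^{(N−p)/p²} ((N−p)/(p−1))^{((p−1)(N−p))/p²}. Then f_ε ≥ 0, for every r > 0 one has lim_{ε → 0⁺} ∫_{B_r(x_0)} f_ε dx = 1, and for every r > 0 one has sup_{|x − x_0| ≥ r} f_ε(x) → 0 as ε → 0⁺; that is, f_ε converges weakly to the Dirac mass δ_{x_0} as ε → 0. -/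
/-!
With `q = p/(p-1)` and `s = ε^p`, the constants `C₀, C₁` combine to exactly `1/ω_N`, so
`f_ε(x) = ω_N⁻¹ s (s + |x - x₀|^q)^(-(N/q + 1))`. In polar coordinates this radial profile has
the explicit primitive `t^N (s + t^q)^(-N/q) / N`, so the mass of `B_r(x₀)` is
`r^N (s + r^q)^(-N/q)`, which tends to `1` as `s → 0⁺`. For `|x - x₀| ≥ r` the profile is at most
`s (r^q)^(-(N/q + 1))`, which tends to `0` uniformly.
-/

open MeasureTheory Real Filter Set Metric Module
open scoped Topology

theorem tendstoUniformlyOn_zero_of_abs_le {ι α : Type*} {l : Filter ι} {F : ι → α → ℝ}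
    {s : Set α} {g : ι → ℝ} (hg : Tendsto g l (𝓝 0)) (hF : ∀ᶠ i in l, ∀ x ∈ s, |F i x| ≤ g i) :
    TendstoUniformlyOn F (fun _ => 0) l s := by
  rw [Metric.tendstoUniformlyOn_iff]
  intro δ hδ
  filter_upwards [hF, hg.eventually (gt_mem_nhds hδ)] with i hFi hgi x hx
  rw [dist_zero_left, Real.norm_eq_abs]
  exact (hFi x hx).trans_lt hgi

theorem TendstoUniformlyOn.comp_tendsto {ι ι' α β : Type*} [UniformSpace β] {F : ι → α → β}
    {f : α → β} {l : Filter ι} {s : Set α} (h : TendstoUniformlyOn F f l s) {l' : Filter ι'}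
    {φ : ι' → ι} (hφ : Tendsto φ l' l) : TendstoUniformlyOn (fun i => F (φ i)) f l' s :=
  fun u hu => hφ.eventually (h u hu)

theorem tendsto_rpow_const_nhdsGT_zero {p : ℝ} (hp : 0 < p) :
    Tendsto (fun x : ℝ => x ^ p) (𝓝[>] 0) (𝓝[>] 0) :=
  tendsto_nhdsWithin_iff.2
    ⟨((continuous_rpow_const hp.le).tendsto' 0 0 (zero_rpow hp.ne')).mono_left nhdsWithin_le_nhds,
      eventually_nhdsWithin_of_forall fun _ hx => rpow_pos_of_pos hx p⟩

theorem hasDerivAt_pow_mul_add_rpow_neg {n : ℕ} (hn : n ≠ 0) {q s y : ℝ} (hq : q ≠ 0)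
    (hs : 0 < s) (hy : 0 < y) :
    HasDerivAt (fun y => y ^ n * (s + y ^ q) ^ (-(n / q)))
      (n * y ^ (n - 1) * (s * (s + y ^ q) ^ (-(n / q + 1)))) y := by
  have hA : 0 < s + y ^ q := by positivity
  have hbase : HasDerivAt (fun y => s + y ^ q) (q * y ^ (q - 1)) y :=
    (hasDerivAt_rpow_const (Or.inl hy.ne')).const_add s
  refine ((hasDerivAt_pow n y).mul
    ((hasDerivAt_rpow_const (Or.inl hA.ne')).comp y hbase)).congr_deriv ?_
  have hsplit : (s + y ^ q) ^ (-(n / q)) = (s + y ^ q) * (s + y ^ q) ^ (-(n / q + 1)) := by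
    rw [← rpow_one_add' hA.le (by simp [hn, hq])]; ring_nf
  have hyq : y * y ^ (q - 1) = y ^ q := by
    rw [← rpow_one_add' hy.le (by simp [hq])]; ring_nf
  rw [Function.comp_apply, hsplit, ← pow_sub_one_mul hn y, show -(n / q) - 1 = -(n / q + 1) by ring]
  have hnq : n / q * q = n := div_mul_cancel₀ _ hq
  linear_combination (-(n / q * q) * y ^ (n - 1) * (s + y ^ q) ^ (-(n / q + 1))) * hyq -
    (y ^ (n - 1) * y ^ q * (s + y ^ q) ^ (-(n / q + 1))) * hnq

theorem integral_pow_mul_add_rpow_neg {n : ℕ} (hn : n ≠ 0) {q s r : ℝ} (hq : 0 < q)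
    (hs : 0 < s) (hr : 0 ≤ r) :
    ∫ y in 0..r, y ^ (n - 1) * (s * (s + y ^ q) ^ (-(n / q + 1))) =
      r ^ n * (s + r ^ q) ^ (-(n / q)) / n := by
  have hA : ∀ y ∈ Icc 0 r, s + y ^ q ≠ 0 := fun y hy =>
    (add_pos_of_pos_of_nonneg hs (rpow_nonneg hy.1 q)).ne'
  have hcont : ContinuousOn (fun y : ℝ => s + y ^ q) (Icc 0 r) :=
    (continuous_const.add (continuous_rpow_const hq.le)).continuousOn
  have hprimitive : ContinuousOn (fun y => y ^ n * (s + y ^ q) ^ (-(n / q)) / n) (Icc 0 r) :=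
    ((continuous_pow n).continuousOn.mul
      (hcont.rpow_const fun y hy => Or.inl (hA y hy))).div_const _
  have hintegrand : ContinuousOn (fun y => y ^ (n - 1) * (s * (s + y ^ q) ^ (-(n / q + 1)))) (Icc 0 r) :=
    (continuous_pow _).continuousOn.mul
      (continuousOn_const.mul (hcont.rpow_const fun y hy => Or.inl (hA y hy)))
  rw [intervalIntegral.integral_eq_sub_of_hasDerivAt_of_le hr hprimitive
    (fun y hy => ?_) (hintegrand.intervalIntegrable_of_Icc hr)]
  · simp [hn]
  · exact ((hasDerivAt_pow_mul_add_rpow_neg hn hq.ne' hs hy.1).div_const (n : ℝ)).congr_deriv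
      (by field_simp)

theorem mul_add_rpow_neg_le {q s r t α : ℝ} (hq : 0 ≤ q) (hr : 0 < r) (hrt : r ≤ t)
    (hs : 0 ≤ s) (hα : 0 ≤ α) : s * (s + t ^ q) ^ (-α) ≤ s * (r ^ q) ^ (-α) := by
  have hrq : r ^ q ≤ s + t ^ q := by
    linarith [rpow_le_rpow hr.le hrt hq]
  exact mul_le_mul_of_nonneg_left
    (rpow_le_rpow_of_nonpos (rpow_pos_of_pos hr q) hrq (by linarith)) hs

theorem tendstoUniformlyOn_const_mul_mul_add_rpow_neg {E : Type*} [SeminormedAddCommGroup E]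
    (x₀ : E) (c : ℝ) {q r α : ℝ} (hq : 0 ≤ q) (hr : 0 < r) (hα : 0 ≤ α) :
    TendstoUniformlyOn (fun s x => c * (s * (s + ‖x - x₀‖ ^ q) ^ (-α))) (fun _ => 0) (𝓝[>] 0)
      {x | r ≤ ‖x - x₀‖} := by
  refine tendstoUniformlyOn_zero_of_abs_le (g := fun s => |c| * (s * (r ^ q) ^ (-α))) ?_ ?_
  · have hs : Tendsto (fun s : ℝ => s) (𝓝[>] 0) (𝓝 0) := tendsto_id.mono_left nhdsWithin_le_nhds
    simpa using (hs.mul_const ((r ^ q) ^ (-α))).const_mul |c|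
  · filter_upwards [self_mem_nhdsWithin] with s (hs : 0 < s) x hx
    rw [abs_mul, abs_of_nonneg (by positivity : 0 ≤ s * (s + ‖x - x₀‖ ^ q) ^ (-α))]
    exact mul_le_mul_of_nonneg_left (mul_add_rpow_neg_le hq hr hx hs.le hα) (abs_nonneg c)

theorem tendsto_pow_mul_add_rpow_neg (n : ℕ) {q r : ℝ} (hq : q ≠ 0) (hr : 0 < r) :
    Tendsto (fun s => r ^ n * (s + r ^ q) ^ (-(n / q))) (𝓝 0) (𝓝 1) := by
  have hrq : 0 < r ^ q := rpow_pos_of_pos hr q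
  have hcont : ContinuousAt (fun s => r ^ n * (s + r ^ q) ^ (-(n / q))) 0 :=
    continuousAt_const.mul
      ((continuousAt_id.add continuousAt_const).rpow_const (Or.inl (by simp [hrq.ne'])))
  convert hcont.tendsto using 2
  rw [zero_add, ← rpow_mul hr.le, ← rpow_natCast, ← rpow_add hr]
  field_simp
  simp

section Radial

variable {E : Type*} [NormedAddCommGroup E] [NormedSpace ℝ E] [Nontrivial E]
  [FiniteDimensional ℝ E] [MeasurableSpace E] [BorelSpace E] (μ : Measure E) [μ.IsAddHaarMeasure]

theorem setIntegral_ball_comp_norm_sub (g : ℝ → ℝ) (x₀ : E) {r : ℝ} (hr : 0 ≤ r) :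
    ∫ x in ball x₀ r, g ‖x - x₀‖ ∂μ =
      finrank ℝ E * μ.real (ball 0 1) * ∫ y in 0..r, y ^ (finrank ℝ E - 1) * g y := by
  have hball : ball x₀ r = (fun x => ‖x - x₀‖) ⁻¹' Iio r := by
    ext x; simp [dist_eq_norm]
  have hradial : ∀ y : ℝ, y ^ (finrank ℝ E - 1) • (Iio r).indicator g y =
      (Iio r).indicator (fun y => y ^ (finrank ℝ E - 1) * g y) y := fun y =>
    by rw [smul_eq_mul, indicator_mul_right]
  have hind : ∀ x, ((fun x => ‖x - x₀‖) ⁻¹' Iio r).indicator (fun x => g ‖x - x₀‖) x =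
      (Iio r).indicator g ‖x - x₀‖ := fun x => indicator_comp_right (fun x => ‖x - x₀‖)
  rw [← integral_indicator measurableSet_ball, hball]
  simp only [hind]
  rw [integral_sub_right_eq_self (fun x => (Iio r).indicator g ‖x‖) x₀,
    integral_fun_norm_addHaar μ]
  simp only [hradial]
  rw [setIntegral_indicator measurableSet_Iio, Ioi_inter_Iio,
    ← integral_Ioc_eq_integral_Ioo, ← intervalIntegral.integral_of_le hr, nsmul_eq_mul,
    smul_eq_mul, mul_assoc]

theorem setIntegral_ball_mul_add_rpow_neg (x₀ : E) {q s r : ℝ} (hq : 0 < q) (hs : 0 < s)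
    (hr : 0 ≤ r) :
    ∫ x in ball x₀ r, s * (s + ‖x - x₀‖ ^ q) ^ (-(finrank ℝ E / q + 1)) ∂μ =
      μ.real (ball 0 1) * (r ^ finrank ℝ E * (s + r ^ q) ^ (-(finrank ℝ E / q))) := by
  have hd : finrank ℝ E ≠ 0 := finrank_pos.ne'
  rw [setIntegral_ball_comp_norm_sub μ (fun t => s * (s + t ^ q) ^ (-(finrank ℝ E / q + 1))) x₀ hr,
    integral_pow_mul_add_rpow_neg hd hq hs hr]
  field_simp

theorem tendsto_setIntegral_ball_mul_add_rpow_neg (x₀ : E) {q r : ℝ} (hq : 0 < q) (hr : 0 < r) :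
    Tendsto (fun s => ∫ x in ball x₀ r, s * (s + ‖x - x₀‖ ^ q) ^ (-(finrank ℝ E / q + 1)) ∂μ)
      (𝓝[>] 0) (𝓝 (μ.real (ball 0 1))) := by
  have hlim : Tendsto (fun s => μ.real (ball (0 : E) 1) *
      (r ^ finrank ℝ E * (s + r ^ q) ^ (-(finrank ℝ E / q)))) (𝓝[>] 0) (𝓝 (μ.real (ball 0 1))) := by
    simpa using
      ((tendsto_pow_mul_add_rpow_neg _ hq.ne' hr).mono_left nhdsWithin_le_nhds).const_mul _
  refine hlim.congr' ?_
  filter_upwards [self_mem_nhdsWithin] with s hs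
  exact (setIntegral_ball_mul_add_rpow_neg μ x₀ hq hs hr.le).symm

end Radial

theorem source_normalizing_constant_eq_inv {N p ω : ℝ} (hp : 1 < p) (hpN : p < N) (hω : 0 < ω) :
    ((p - 1) / (N - p) * (N * ω) ^ (-(1 : ℝ) / (p - 1))) ^ (p - 1) *
      (N ^ ((N - p) / p ^ 2) * ((N - p) / (p - 1)) ^ ((p - 1) * (N - p) / p ^ 2)) ^
        (p ^ 2 / (N - p)) = ω⁻¹ := by
  have hp1 : 0 < p - 1 := by linarith
  have hNp : 0 < N - p := by linarith
  have hN : 0 < N := by linarith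
  have hC0 : ((p - 1) / (N - p) * (N * ω) ^ (-(1 : ℝ) / (p - 1))) ^ (p - 1) =
      ((p - 1) / (N - p)) ^ (p - 1) * (N * ω)⁻¹ := by
    rw [mul_rpow (by positivity) (by positivity), ← rpow_mul (by positivity),
      div_mul_cancel₀ _ hp1.ne', rpow_neg_one]
  have hC1 : (N ^ ((N - p) / p ^ 2) * ((N - p) / (p - 1)) ^ ((p - 1) * (N - p) / p ^ 2)) ^
      (p ^ 2 / (N - p)) = N * ((N - p) / (p - 1)) ^ (p - 1) := by
    rw [mul_rpow (by positivity) (by positivity), ← rpow_mul hN.le, ← rpow_mul (by positivity)]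
    congr 2
    · rw [show (N - p) / p ^ 2 * (p ^ 2 / (N - p)) = 1 by field_simp, rpow_one]
    · field_simp
  have hcancel : ((p - 1) / (N - p)) ^ (p - 1) * ((N - p) / (p - 1)) ^ (p - 1) = 1 := by
    rw [← mul_rpow (by positivity) (by positivity), div_mul_div_cancel₀ hNp.ne', div_self hp1.ne',
      one_rpow]
  rw [hC0, hC1]
  calc _ = (((p - 1) / (N - p)) ^ (p - 1) * ((N - p) / (p - 1)) ^ (p - 1)) * (N * (N * ω)⁻¹) := by
        ring
    _ = ω⁻¹ := by rw [hcancel, one_mul, mul_inv, mul_inv_cancel_left₀ hN.ne']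

/-- The family `f_ε = −Δ_p Γ_ε` of regularized sources is nonnegative, its integral over any
fixed ball around `x₀` tends to `1`, and it tends to `0` uniformly away from `x₀`, as
`ε → 0⁺`; that is, `f_ε ⇀ δ_{x₀}`. -/
theorem regularized_source_weak_dirac (N : ℕ) (hN : 2 ≤ N) (p : ℝ)
    (hp2 : 2 ≤ p) (hpN : p < N) (x0 : EuclideanSpace ℝ (Fin N)) :
    let ωN : ℝ := (volume (Metric.ball (0 : EuclideanSpace ℝ (Fin N)) 1)).toReal
    let C0 : ℝ := ((p - 1) / ((N : ℝ) - p)) * ((N : ℝ) * ωN) ^ (-(1 : ℝ) / (p - 1))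
    let C1 : ℝ := (N : ℝ) ^ (((N : ℝ) - p) / p ^ 2) *
      (((N : ℝ) - p) / (p - 1)) ^ ((p - 1) * ((N : ℝ) - p) / p ^ 2)
    let fε : ℝ → EuclideanSpace ℝ (Fin N) → ℝ :=
      fun ε x => C0 ^ (p - 1) * C1 ^ (p ^ 2 / ((N : ℝ) - p)) * ε ^ p *
        (ε ^ p + ‖x - x0‖ ^ (p / (p - 1))) ^ (-((N : ℝ) - ((N : ℝ) - p) / p))
    (∀ ε : ℝ, 0 < ε → ∀ x : EuclideanSpace ℝ (Fin N), 0 ≤ fε ε x) ∧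
    (∀ r : ℝ, 0 < r →
      Filter.Tendsto (fun ε => ∫ x in Metric.ball x0 r, fε ε x)
        (nhdsWithin 0 (Set.Ioi 0)) (nhds 1)) ∧
    ∀ r : ℝ, 0 < r →
      TendstoUniformlyOn (fun ε x => fε ε x) (fun _ => (0 : ℝ))
        (nhdsWithin 0 (Set.Ioi 0)) {x : EuclideanSpace ℝ (Fin N) | r ≤ ‖x - x0‖} := by
  intro ωN C0 C1 fε
  have : Nontrivial (EuclideanSpace ℝ (Fin N)) :=
    Module.nontrivial_of_finrank_pos (R := ℝ) (by rw [finrank_euclideanSpace_fin]; omega)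
  have hp : 1 < p := by linarith
  have hq : 0 < p / (p - 1) := div_pos (by linarith) (by linarith)
  have hωN : 0 < ωN := ENNReal.toReal_pos (measure_ball_pos _ _ one_pos).ne' measure_ball_lt_top.ne
  have hfε : ∀ ε x, fε ε x = ωN⁻¹ *
      (ε ^ p * (ε ^ p + ‖x - x0‖ ^ (p / (p - 1))) ^ (-(N / (p / (p - 1)) + 1))) := by
    intro ε x
    simp only [fε, C0, C1]
    rw [source_normalizing_constant_eq_inv hp hpN hωN,
      show -((N : ℝ) - (N - p) / p) = -(N / (p / (p - 1)) + 1) by field_simp; ring]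
    ring
  have hα : 0 ≤ N / (p / (p - 1)) + 1 := add_nonneg (div_nonneg N.cast_nonneg hq.le) zero_le_one
  have hεp := tendsto_rpow_const_nhdsGT_zero (p := p) (by linarith)
  refine ⟨fun ε hε x => by rw [hfε]; positivity, fun r hr => ?_, fun r hr => ?_⟩
  · have hmass := tendsto_setIntegral_ball_mul_add_rpow_neg volume x0 hq hr
    have hωN_def : volume.real (ball (0 : EuclideanSpace ℝ (Fin N)) 1) = ωN := rfl
    rw [finrank_euclideanSpace_fin, hωN_def] at hmass
    have h := (hmass.comp hεp).const_mul ωN⁻¹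
    rw [inv_mul_cancel₀ hωN.ne'] at h
    simpa only [hfε, integral_const_mul, Function.comp_def] using h
  · simp only [hfε]
    exact (tendstoUniformlyOn_const_mul_mul_add_rpow_neg x0 ωN⁻¹ hq.le hr hα).comp_tendsto hεp
end
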